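/- arXiv:1204.4787 — 7 statements merged into one kernel-verified Lean document; each statement's English description precedes it below -/
import Mathlib

section
/- Let (g,B) be a non-Abelian quadratic Lie algebra. Then there exist a central ideal z and a nonzero ideal l of g such that: g is the direct sum of z and l with B(z, l) = {0}; the restrictions of B to z × z and to l × l are non-degenerate; l is non-Abelian; the center Z(l) of l is totally isotropic for B and is contained in [l, l]; and dim(Z(l)) ≤ (1/2)·dim(l) ≤ dim([l, l]). -/
/-!
Invariance of `B` makes the centre `Z` of `g` the `B`-orthogonal of `[g, g]`, so the radical of
`B` on `Z` is `Z ∩ [g, g]`. Let `z` be a complement of this radical inside `Z`: then `B` is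
non-degenerate on `z`, hence `g = z ⊕ z^⊥`, and `l := z^⊥` is an ideal. Since `z` is central,
`[l, l] = [g, g]` and `Z(l) = Z ∩ l = Z ∩ [g, g]`, which is isotropic and contained in `[l, l]`.
Counting dimensions gives `dim l = dim Z(l) + dim [l, l]`, and both inequalities follow from
`Z(l) ⊆ [l, l]`.
-/

open Module

def centerIn (g : Type) [LieRing g] [LieAlgebra ℂ g] (S : Submodule ℂ g) :
    Submodule ℂ g where
  carrier := {x | x ∈ S ∧ ∀ y ∈ S, ⁅x, y⁆ = (0 : g)}
  add_mem' := by
    rintro a b ⟨ha1, ha2⟩ ⟨hb1, hb2⟩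
    exact ⟨S.add_mem ha1 hb1, fun y hy => by rw [add_lie, ha2 y hy, hb2 y hy, add_zero]⟩
  zero_mem' := ⟨S.zero_mem, fun y _ => zero_lie y⟩
  smul_mem' := by
    rintro c a ⟨ha1, ha2⟩
    exact ⟨S.smul_mem c ha1, fun y hy => by rw [smul_lie, ha2 y hy, smul_zero]⟩

open LieAlgebra

namespace LinearMap.BilinForm

variable {K V : Type*} [Field K] [AddCommGroup V] [Module K V] {B : LinearMap.BilinForm K V}

theorem exists_restrict_nondegenerate_sup_inf_orthogonal_eq (hB : B.IsRefl) (Z : Submodule K V) :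
    ∃ W, Disjoint W (Z ⊓ B.orthogonal Z) ∧ W ⊔ Z ⊓ B.orthogonal Z = Z ∧
      (B.restrict W).Nondegenerate := by
  set R := Z ⊓ B.orthogonal Z
  obtain ⟨W', hW'⟩ := Submodule.exists_isCompl R
  have hdisj : Disjoint (W' ⊓ Z) R := hW'.disjoint.symm.mono_left inf_le_left
  have hsup : W' ⊓ Z ⊔ R = Z := by
    rw [sup_comm, ← sup_inf_assoc_of_le _ inf_le_left, hW'.sup_eq_top, top_inf_eq]
  refine ⟨W' ⊓ Z, hdisj, hsup, B.nondegenerate_restrict_of_disjoint_orthogonal hB ?_⟩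
  rw [Submodule.disjoint_def]
  intro x hxW hxW'
  have hxZ : x ∈ Z := hxW.2
  refine Submodule.disjoint_def.mp hdisj x hxW ⟨hxZ, fun n hn => ?_⟩
  obtain ⟨w, hw, r, hr, rfl⟩ := Submodule.mem_sup.mp (hsup.symm ▸ hn : n ∈ W' ⊓ Z ⊔ R)
  rw [add_left, hxW' w hw, hB _ _ (hr.2 x hxZ), add_zero]

theorem inf_orthogonal_eq_inf_orthogonal_of_sup_eq {W Z : Submodule K V}
    (hW : Disjoint W (B.orthogonal W)) (hWZ : W ⊔ Z ⊓ B.orthogonal Z = Z) :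
    Z ⊓ B.orthogonal W = Z ⊓ B.orthogonal Z := by
  have hle : Z ⊓ B.orthogonal Z ≤ B.orthogonal W :=
    inf_le_right.trans (orthogonal_le (le_sup_left.trans_eq hWZ))
  conv_lhs => rw [← hWZ, sup_comm, sup_inf_assoc_of_le _ hle, hW.eq_bot, sup_bot_eq]

theorem finrank_orthogonal_eq_finrank_orthogonal_sup_add [FiniteDimensional K V]
    (hB : B.Nondegenerate) {W R : Submodule K V} (h : Disjoint W R) :
    finrank K (B.orthogonal W) = finrank K (B.orthogonal (W ⊔ R)) + finrank K R := by
  have hsum := Submodule.finrank_sup_add_finrank_inf_eq W R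
  rw [h.eq_bot, finrank_bot] at hsum
  have := Submodule.finrank_le (W ⊔ R)
  rw [finrank_orthogonal hB, finrank_orthogonal hB]
  omega

end LinearMap.BilinForm

section LieIdeal

variable {R L : Type*} [CommRing R] [LieRing L] [LieAlgebra R L]

def LieIdeal.ofLeCenter (W : Submodule R L) (hW : W ≤ (center R L).toSubmodule) :
    LieIdeal R L where
  toSubmodule := W
  lie_mem {x _} hm := by
    rw [(LieModule.mem_maxTrivSubmodule R L L _).mp (hW hm) x]
    exact W.zero_mem

theorem LieIdeal.lie_self_eq_lie_top_of_le_center {z l : LieIdeal R L} (hz : z ≤ center R L)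
    (h : z ⊔ l = ⊤) : ⁅l, l⁆ = ⁅(⊤ : LieIdeal R L), (⊤ : LieIdeal R L)⁆ := by
  have hcentral : ∀ I : LieIdeal R L, ⁅z, I⁆ = ⊥ := fun I => by
    rw [LieSubmodule.lie_comm, eq_bot_iff, ← LieModule.ideal_oper_maxTrivSubmodule_eq_bot R L L I]
    exact LieSubmodule.mono_lie_right I hz
  rw [← h, LieSubmodule.sup_lie, LieSubmodule.lie_sup, LieSubmodule.lie_sup,
    LieSubmodule.lie_comm l z, hcentral, hcentral, bot_sup_eq, bot_sup_eq, bot_sup_eq]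

theorem LieIdeal.exists_lie_ne_zero_of_lie_self_eq_lie_top {l : LieIdeal R L}
    (hl : ⁅l, l⁆ = ⁅(⊤ : LieIdeal R L), (⊤ : LieIdeal R L)⁆) (h : ¬IsLieAbelian L) :
    ∃ x ∈ l, ∃ y ∈ l, ⁅x, y⁆ ≠ (0 : L) := by
  by_contra! hab
  rw [(LieSubmodule.lie_eq_bot_iff l l).mpr hab, eq_comm, LieSubmodule.lie_eq_bot_iff] at hl
  exact h ⟨fun a b => hl a (LieSubmodule.mem_top a) b (LieSubmodule.mem_top b)⟩

end LieIdeal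

theorem centerIn_eq_center_inf {g : Type} [LieRing g] [LieAlgebra ℂ g] {z S : Submodule ℂ g}
    (hz : z ≤ (center ℂ g).toSubmodule) (h : z ⊔ S = ⊤) :
    centerIn g S = (center ℂ g).toSubmodule ⊓ S := by
  ext x
  refine ⟨fun ⟨hxS, hx⟩ => ⟨fun y => ?_, hxS⟩, fun ⟨hxZ, hxS⟩ => ⟨hxS, fun y _ => ?_⟩⟩
  · obtain ⟨w, hw, s, hs, rfl⟩ := Submodule.mem_sup.mp (h ▸ Submodule.mem_top : y ∈ z ⊔ S)
    rw [add_lie, ← lie_skew w x, ← lie_skew s x,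
      (LieModule.mem_maxTrivSubmodule ℂ g g w).mp (hz hw) x, hx s hs, neg_zero, add_zero]
  · rw [← lie_skew x y, (LieModule.mem_maxTrivSubmodule ℂ g g x).mp hxZ y, neg_zero]

section InvariantForm

variable {R L : Type*} [CommRing R] [LieRing L] [LieAlgebra R L] {B : LinearMap.BilinForm R L}

theorem LinearMap.BilinForm.lieInvariant_of_apply_lie_eq_apply_lie
    (hinv : ∀ x y z : L, B ⁅x, y⁆ z = B x ⁅y, z⁆) : B.lieInvariant L := fun x y z => by
  rw [← lie_skew, map_neg, LinearMap.neg_apply, hinv]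

theorem lie_top_le_orthogonal_center (hinv : ∀ x y z : L, B ⁅x, y⁆ z = B x ⁅y, z⁆) :
    (⁅(⊤ : LieIdeal R L), (⊤ : LieIdeal R L)⁆ : LieIdeal R L).toSubmodule ≤
      B.orthogonal (center R L).toSubmodule := by
  rw [LieSubmodule.lieIdeal_oper_eq_linear_span', Submodule.span_le]
  rintro _ ⟨a, -, b, -, rfl⟩ c hc
  show B c ⁅a, b⁆ = 0
  rw [← hinv, ← lie_skew, (LieModule.mem_maxTrivSubmodule R L L c).mp hc a, neg_zero, map_zero,
    LinearMap.zero_apply]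

theorem orthogonal_lie_top_le_center (hB : B.SeparatingRight)
    (hinv : ∀ x y z : L, B ⁅x, y⁆ z = B x ⁅y, z⁆) :
    B.orthogonal (⁅(⊤ : LieIdeal R L), (⊤ : LieIdeal R L)⁆ : LieIdeal R L).toSubmodule ≤
      (center R L).toSubmodule := fun x hx =>
  (LieModule.mem_maxTrivSubmodule R L L x).mpr fun y => hB _ fun a => by
    rw [← hinv]
    exact hx _ (LieSubmodule.lie_mem_lie (LieSubmodule.mem_top a) (LieSubmodule.mem_top y))

end InvariantForm

section Quadratic

variable {K L : Type*} [Field K] [LieRing L] [LieAlgebra K L] [FiniteDimensional K L]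
  {B : LinearMap.BilinForm K L}

theorem orthogonal_center_eq_lie_top (hB : B.Nondegenerate)
    (hinv : ∀ x y z : L, B ⁅x, y⁆ z = B x ⁅y, z⁆) :
    B.orthogonal (center K L).toSubmodule =
      (⁅(⊤ : LieIdeal K L), (⊤ : LieIdeal K L)⁆ : LieIdeal K L).toSubmodule := by
  refine (Submodule.eq_of_le_of_finrank_le (lie_top_le_orthogonal_center hinv) ?_).symm
  have := Submodule.finrank_mono (orthogonal_lie_top_le_center hB.2 hinv)
  have := Submodule.finrank_le (⁅(⊤ : LieIdeal K L), (⊤ : LieIdeal K L)⁆ : LieIdeal K L).toSubmodule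
  rw [LinearMap.BilinForm.finrank_orthogonal hB] at *
  omega

theorem exists_le_center_restrict_nondegenerate (hB : B.Nondegenerate) (hrefl : B.IsRefl)
    (hinv : ∀ x y z : L, B ⁅x, y⁆ z = B x ⁅y, z⁆) :
    ∃ z : LieIdeal K L, z ≤ center K L ∧ (B.restrict z.toSubmodule).Nondegenerate ∧
      (center K L).toSubmodule ⊓ B.orthogonal z.toSubmodule =
        (center K L).toSubmodule ⊓ (⁅(⊤ : LieIdeal K L), ⊤⁆ : LieIdeal K L).toSubmodule ∧
      finrank K (B.orthogonal z.toSubmodule) =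
        finrank K (⁅(⊤ : LieIdeal K L), ⊤⁆ : LieIdeal K L).toSubmodule +
          finrank K ↥((center K L).toSubmodule ⊓
            (⁅(⊤ : LieIdeal K L), ⊤⁆ : LieIdeal K L).toSubmodule) := by
  obtain ⟨W, hdisj, hsup, hWnd⟩ :=
    B.exists_restrict_nondegenerate_sup_inf_orthogonal_eq hrefl (center K L).toSubmodule
  have hWZ : W ≤ (center K L).toSubmodule := le_sup_left.trans_eq hsup
  refine ⟨LieIdeal.ofLeCenter W hWZ, hWZ, hWnd, ?_, ?_⟩
  · rw [← orthogonal_center_eq_lie_top hB hinv]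
    exact B.inf_orthogonal_eq_inf_orthogonal_of_sup_eq
      (B.isCompl_orthogonal_of_restrict_nondegenerate hrefl hWnd).disjoint hsup
  · have hdim := B.finrank_orthogonal_eq_finrank_orthogonal_sup_add hB hdisj
    rwa [hsup, orthogonal_center_eq_lie_top hB hinv] at hdim

end Quadratic

/-- **Reduction of a quadratic Lie algebra.** Let `(g, B)` be a non-Abelian quadratic Lie
algebra.  Then there exist a central ideal `z` and a nonzero ideal `l` such that `g` is
the orthogonal direct sum of `z` and `l`, the restrictions of `B` to `z` and `l` are
non-degenerate, `l` is non-Abelian, the center `Z(l)` is totally isotropic and contained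
in `[l, l]`, and `dim Z(l) ≤ (1/2) dim l ≤ dim [l, l]`. -/
theorem quadratic_reduction (g : Type) [LieRing g] [LieAlgebra ℂ g]
    [FiniteDimensional ℂ g]
    (B : LinearMap.BilinForm ℂ g)
    (hsymm : ∀ x y : g, B x y = B y x)
    (hnd : B.Nondegenerate)
    (hinv : ∀ x y z : g, B ⁅x, y⁆ z = B x ⁅y, z⁆)
    (hnonab : ¬ IsLieAbelian g) :
    ∃ z l : LieIdeal ℂ g,
      l ≠ ⊥ ∧
      z ≤ LieAlgebra.center ℂ g ∧
      z.toSubmodule ⊓ l.toSubmodule = ⊥ ∧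
      z.toSubmodule ⊔ l.toSubmodule = ⊤ ∧
      (∀ x ∈ z, ∀ y ∈ l, B x y = 0) ∧
      (B.restrict z.toSubmodule).Nondegenerate ∧
      (B.restrict l.toSubmodule).Nondegenerate ∧
      (∃ x ∈ l, ∃ y ∈ l, ⁅x, y⁆ ≠ (0 : g)) ∧
      (∀ x ∈ centerIn g l.toSubmodule, ∀ y ∈ centerIn g l.toSubmodule, B x y = 0) ∧
      centerIn g l.toSubmodule ≤ (⁅l, l⁆ : LieIdeal ℂ g).toSubmodule ∧
      2 * finrank ℂ ↥(centerIn g l.toSubmodule) ≤ finrank ℂ ↥l.toSubmodule ∧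
      finrank ℂ ↥l.toSubmodule ≤ 2 * finrank ℂ ↥(⁅l, l⁆ : LieIdeal ℂ g).toSubmodule := by
  have hrefl : B.IsRefl := fun x y h => (hsymm y x).trans h
  obtain ⟨z, hz, hznd, hcenter, hdim⟩ := exists_le_center_restrict_nondegenerate hnd hrefl hinv
  set l := InvariantForm.orthogonal B (B.lieInvariant_of_apply_lie_eq_apply_lie hinv) z
  have hl : l.toSubmodule = B.orthogonal z.toSubmodule := rfl
  have hcompl : IsCompl z.toSubmodule l.toSubmodule :=
    B.isCompl_orthogonal_of_restrict_nondegenerate hrefl hznd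
  have hll : ⁅l, l⁆ = ⁅(⊤ : LieIdeal ℂ g), ⊤⁆ := LieIdeal.lie_self_eq_lie_top_of_le_center hz
    (LieSubmodule.toSubmodule_injective hcompl.sup_eq_top)
  have hcenterIn : centerIn g l.toSubmodule =
      (center ℂ g).toSubmodule ⊓ (⁅(⊤ : LieIdeal ℂ g), ⊤⁆ : LieIdeal ℂ g).toSubmodule := by
    rw [centerIn_eq_center_inf hz hcompl.sup_eq_top, hl, hcenter]
  have hcenter_le : centerIn g l.toSubmodule ≤ (⁅l, l⁆ : LieIdeal ℂ g).toSubmodule := by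
    rw [hcenterIn, hll]
    exact inf_le_right
  have hdiml : finrank ℂ l.toSubmodule =
      finrank ℂ (⁅l, l⁆ : LieIdeal ℂ g).toSubmodule + finrank ℂ (centerIn g l.toSubmodule) := by
    rw [hcenterIn, hll, hl, hdim]
  have hle := Submodule.finrank_mono hcenter_le
  obtain ⟨x, hx, y, hy, hxy⟩ := LieIdeal.exists_lie_ne_zero_of_lie_self_eq_lie_top hll hnonab
  refine ⟨z, l, fun h => hxy ?_, hz, hcompl.inf_eq_bot, hcompl.sup_eq_top,
    fun x hx y hy => hy x hx, hznd, ?_, ⟨x, hx, y, hy, hxy⟩, ?_, hcenter_le, by omega, by omega⟩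
  · rw [(LieSubmodule.mem_bot x).mp (h ▸ hx), zero_lie]
  · rw [B.restrict_nondegenerate_iff_isCompl_orthogonal hrefl, hl,
      B.orthogonal_orthogonal hnd hrefl]
    exact hcompl.symm
  · rw [hcenterIn, ← orthogonal_center_eq_lie_top hnd hinv]
    exact fun x hx y hy => hy.2 x hx.1
end

section
/- Let (g,B) be a non-Abelian quadratic Lie algebra and let g = z ⊕ l be a decomposition as in the reduction: z a central ideal, l a nonzero non-Abelian ideal orthogonal to z, with both restrictions of B non-degenerate and Z(l) totally isotropic. Let g' be a Lie algebra with non-degenerate invariant symmetric bilinear form B' and A : g → g' a Lie algebra isomorphism. Then g' = A(z) ⊕ A(z)⊥ where A(z) is central in g', the center of l' = A(z)⊥ is totally isotropic for B', and l and l' are isomorphic as Lie algebras; moreover, if A additionally satisfies B'(A(X),A(Y)) = B(X,Y) for all X,Y ∈ g then l and l' are i-isomorphic. -/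
/-- The orthogonal complement `{x | B x y = 0 for all y ∈ N}` of a subspace `N` with
respect to a bilinear form `B`. -/
def orthogonalOf (V : Type) [AddCommGroup V] [Module ℂ V]
    (B : LinearMap.BilinForm ℂ V) (N : Submodule ℂ V) : Submodule ℂ V where
  carrier := {x | ∀ y ∈ N, B x y = 0}
  add_mem' := by
    intro a b ha hb y hy
    simp only [map_add, LinearMap.add_apply, ha y hy, hb y hy, add_zero]
  zero_mem' := by
    intro y hy
    simp
  smul_mem' := by
    intro c a ha y hy
    simp only [map_smul, LinearMap.smul_apply, ha y hy, smul_zero]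

/-!
In a quadratic Lie algebra the center is the orthogonal of the derived algebra and vice versa.
Applied to `l`, this puts the totally isotropic center of `l` inside `[l, l]`, so that
`Z(g) = z ⊕ (Z(g) ∩ [g, g])`; this is a statement about the Lie algebra alone, hence it holds for
`A(z)` in `g'` as well. There it gives `A(z) ∩ A(z)⊥ = 0`, and it puts the center of `A(z)⊥`
inside `Z(g') ∩ [g', g'] = Z(g') ∩ Z(g')⊥`, which is totally isotropic. As `A(z)` is central and
`[g', g'] ⊆ A(z)⊥`, the projection onto `A(z)⊥` along `A(z)` respects brackets; composed with
`A` it maps `l` isomorphically onto `A(z)⊥`, and it agrees with `A` on `l` when `A` is an isometry.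
-/

open LieAlgebra

lemma orthogonalOf_eq_orthogonal {V : Type} [AddCommGroup V] [Module ℂ V]
    {B : LinearMap.BilinForm ℂ V} (hB : B.IsRefl) (N : Submodule ℂ V) :
    orthogonalOf V B N = B.orthogonal N := by
  ext x
  exact forall₂_congr fun y _ => ⟨hB x y, hB y x⟩

section QuadraticLieAlgebra

variable {K L : Type*} [Field K] [LieRing L] [LieAlgebra K L] {Φ : LinearMap.BilinForm K L}

lemma derivedSeries_one_toSubmodule :
    (derivedSeries K L 1).toSubmodule = Submodule.span K {⁅x, y⁆ | (x : L) (y : L)} := by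
  rw [← coe_derivedSeries_one_eq, LieIdeal.toLieSubalgebra_toSubmodule]

lemma mem_orthogonal_span_iff {s : Set L} {x : L} :
    x ∈ Φ.orthogonal (Submodule.span K s) ↔ ∀ n ∈ s, Φ n x = 0 := by
  refine ⟨fun h n hn => h n (Submodule.subset_span hn), fun h n hn => ?_⟩
  exact (Submodule.span_le (p := LinearMap.ker (Φ.flip x))).2 h hn

lemma center_eq_orthogonal_derivedSeries (hnd : Φ.Nondegenerate)
    (hinv : ∀ x y z : L, Φ ⁅x, y⁆ z = Φ x ⁅y, z⁆) :
    (center K L).toSubmodule = Φ.orthogonal (derivedSeries K L 1).toSubmodule := by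
  ext x
  rw [derivedSeries_one_toSubmodule, mem_orthogonal_span_iff, LieSubmodule.mem_toSubmodule,
    LieModule.mem_maxTrivSubmodule]
  constructor
  · rintro h _ ⟨a, b, rfl⟩
    rw [hinv, h, map_zero]
  · exact fun h b => hnd.2 _ fun a => by rw [← hinv]; exact h _ ⟨a, b, rfl⟩

lemma derivedSeries_eq_orthogonal_center [FiniteDimensional K L] (hrefl : Φ.IsRefl)
    (hnd : Φ.Nondegenerate) (hinv : ∀ x y z : L, Φ ⁅x, y⁆ z = Φ x ⁅y, z⁆) :
    (derivedSeries K L 1).toSubmodule = Φ.orthogonal (center K L).toSubmodule := by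
  rw [center_eq_orthogonal_derivedSeries hnd hinv,
    LinearMap.BilinForm.orthogonal_orthogonal hnd hrefl]

lemma center_le_derivedSeries_of_isotropic [FiniteDimensional K L] (hrefl : Φ.IsRefl)
    (hnd : Φ.Nondegenerate) (hinv : ∀ x y z : L, Φ ⁅x, y⁆ z = Φ x ⁅y, z⁆)
    (hiso : ∀ x ∈ center K L, ∀ y ∈ center K L, Φ x y = 0) :
    center K L ≤ derivedSeries K L 1 := by
  intro x hx
  rw [← LieSubmodule.mem_toSubmodule, derivedSeries_eq_orthogonal_center hrefl hnd hinv]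
  exact fun y hy => hiso y hy x hx

end QuadraticLieAlgebra

lemma coe_mem_centerIn_iff {L : Type} [LieRing L] [LieAlgebra ℂ L] {S : LieSubalgebra ℂ L}
    {x : S} : (x : L) ∈ centerIn L S.toSubmodule ↔ x ∈ center ℂ S := by
  rw [LieModule.mem_maxTrivSubmodule]
  refine ⟨fun h y => Subtype.ext ?_, fun h => ⟨x.2, fun y hy => ?_⟩⟩
  · rw [LieSubalgebra.coe_bracket, ← lie_skew, h.2 y y.2, neg_zero, ZeroMemClass.coe_zero]
  · rw [← lie_skew, neg_eq_zero]
    simpa using congrArg Subtype.val (h ⟨y, hy⟩)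

lemma center_inf_le_centerIn {L : Type} [LieRing L] [LieAlgebra ℂ L] (S : Submodule ℂ L) :
    (center ℂ L).toSubmodule ⊓ S ≤ centerIn L S :=
  fun x hx => ⟨hx.2, fun y _ => by
    rw [← lie_skew, (LieModule.mem_maxTrivSubmodule ℂ L L x).1 hx.1 y, neg_zero]⟩

lemma centerIn_le_center {L : Type} [LieRing L] [LieAlgebra ℂ L] {z S : Submodule ℂ L}
    (hz : z ≤ (center ℂ L).toSubmodule) (hzS : Codisjoint z S) :
    centerIn L S ≤ (center ℂ L).toSubmodule := by
  rintro x ⟨-, hx⟩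
  refine (LieModule.mem_maxTrivSubmodule ℂ L L x).2 fun y => ?_
  obtain ⟨u, hu, w, hw, rfl⟩ := Submodule.mem_sup.1 (hzS.eq_top ▸ Submodule.mem_top : y ∈ z ⊔ S)
  rw [← lie_skew, neg_eq_zero, lie_add, (LieModule.mem_maxTrivSubmodule ℂ L L u).1 (hz hu) x,
    hx w hw, add_zero]

lemma centerIn_le_derivedSeries {L : Type} [LieRing L] [LieAlgebra ℂ L] [FiniteDimensional ℂ L]
    {Φ : LinearMap.BilinForm ℂ L} (S : LieSubalgebra ℂ L) (hrefl : Φ.IsRefl)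
    (hnd : (Φ.restrict S.toSubmodule).Nondegenerate) (hinv : ∀ x y z : L, Φ ⁅x, y⁆ z = Φ x ⁅y, z⁆)
    (hiso : ∀ x ∈ centerIn L S.toSubmodule, ∀ y ∈ centerIn L S.toSubmodule, Φ x y = 0) :
    centerIn L S.toSubmodule ≤ (derivedSeries ℂ L 1).toSubmodule := by
  have hZ : center ℂ S ≤ derivedSeries ℂ S 1 :=
    center_le_derivedSeries_of_isotropic (Φ := Φ.restrict S.toSubmodule) (fun x y => hrefl x y) hnd
      (fun x y z => hinv x y z) fun x hx y hy =>
        hiso x (coe_mem_centerIn_iff.2 hx) y (coe_mem_centerIn_iff.2 hy)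
  intro x hx
  have hxS : (⟨x, hx.1⟩ : S) ∈ derivedSeries ℂ S 1 := hZ (coe_mem_centerIn_iff.1 hx)
  exact LieIdeal.derivedSeries_map_le (f := S.incl) 1 (LieIdeal.mem_map hxS)

section CentralSplitting

variable {K L L' : Type*} [Field K] [LieRing L] [LieAlgebra K L] [LieRing L'] [LieAlgebra K L']

lemma LieEquiv.map_center_toSubmodule (e : L ≃ₗ⁅K⁆ L') :
    (center K L).toSubmodule.map (e.toLinearEquiv : L →ₗ[K] L') = (center K L').toSubmodule := by
  ext y
  simp only [Submodule.mem_map_equiv, LieSubmodule.mem_toSubmodule, LieModule.mem_maxTrivSubmodule]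
  refine e.symm.surjective.forall.trans (forall_congr' fun x => ?_)
  change ⁅e.symm x, e.symm y⁆ = 0 ↔ _
  rw [← LieEquiv.map_lie]
  exact e.symm.toLinearEquiv.map_eq_zero_iff

lemma LieEquiv.map_derivedSeries_toSubmodule (e : L ≃ₗ⁅K⁆ L') (k : ℕ) :
    (derivedSeries K L k).toSubmodule.map (e.toLinearEquiv : L →ₗ[K] L') =
      (derivedSeries K L' k).toSubmodule := by
  rw [← LieIdeal.derivedSeries_map_eq (f := e.toLieHom) k e.surjective,
    LieIdeal.coe_map_of_surjective e.surjective]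
  rfl

/-- `z` is central and `Z(L) = z ⊕ (Z(L) ∩ [L, L])`. -/
structure SplitsCenter (z : Submodule K L) : Prop where
  le_center : z ≤ (center K L).toSubmodule
  disjoint_derivedSeries : Disjoint z (derivedSeries K L 1).toSubmodule
  center_le : (center K L).toSubmodule ≤ z ⊔ (derivedSeries K L 1).toSubmodule

lemma SplitsCenter.map {z : Submodule K L} (h : SplitsCenter z) (e : L ≃ₗ⁅K⁆ L') :
    SplitsCenter (z.map (e.toLinearEquiv : L →ₗ[K] L')) where
  le_center := e.map_center_toSubmodule ▸ Submodule.map_mono h.le_center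
  disjoint_derivedSeries := e.map_derivedSeries_toSubmodule 1 ▸
    Submodule.disjoint_map e.injective h.disjoint_derivedSeries
  center_le := by
    rw [← e.map_center_toSubmodule, ← e.map_derivedSeries_toSubmodule, ← Submodule.map_sup]
    exact Submodule.map_mono h.center_le

lemma derivedSeries_le_of_codisjoint {z : Submodule K L} (l : LieIdeal K L)
    (hz : z ≤ (center K L).toSubmodule) (hzl : Codisjoint z l.toSubmodule) :
    (derivedSeries K L 1).toSubmodule ≤ l.toSubmodule := by
  rw [derivedSeries_one_toSubmodule, Submodule.span_le]
  rintro _ ⟨a, b, rfl⟩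
  obtain ⟨u, hu, w, hw, rfl⟩ := Submodule.mem_sup.1 (hzl.eq_top ▸ Submodule.mem_top : b ∈ z ⊔ _)
  rw [lie_add, (LieModule.mem_maxTrivSubmodule K L L u).1 (hz hu) a, zero_add]
  exact l.lie_mem hw

lemma splitsCenter_of_isCompl {z : Submodule K L} (l : LieIdeal K L)
    (hz : z ≤ (center K L).toSubmodule) (hzl : IsCompl z l.toSubmodule)
    (hl : (center K L).toSubmodule ⊓ l.toSubmodule ≤ (derivedSeries K L 1).toSubmodule) :
    SplitsCenter z where
  le_center := hz
  disjoint_derivedSeries :=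
    hzl.disjoint.mono_right (derivedSeries_le_of_codisjoint l hz hzl.codisjoint)
  center_le := by
    have hC := sup_inf_assoc_of_le l.toSubmodule hz
    rw [hzl.codisjoint.eq_top, top_inf_eq, inf_comm] at hC
    exact hC.le.trans (sup_le_sup_left hl z)

end CentralSplitting

section OrthogonalOfCentralSplitting

variable {K L : Type*} [Field K] [LieRing L] [LieAlgebra K L] [FiniteDimensional K L]
  {Φ : LinearMap.BilinForm K L} {z : Submodule K L}

lemma SplitsCenter.derivedSeries_le_orthogonal (h : SplitsCenter z) (hrefl : Φ.IsRefl)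
    (hnd : Φ.Nondegenerate) (hinv : ∀ x y z : L, Φ ⁅x, y⁆ z = Φ x ⁅y, z⁆) :
    (derivedSeries K L 1).toSubmodule ≤ Φ.orthogonal z :=
  derivedSeries_eq_orthogonal_center hrefl hnd hinv ▸ LinearMap.BilinForm.orthogonal_le h.le_center

lemma SplitsCenter.isCompl_orthogonal (h : SplitsCenter z) (hrefl : Φ.IsRefl)
    (hnd : Φ.Nondegenerate) (hinv : ∀ x y z : L, Φ ⁅x, y⁆ z = Φ x ⁅y, z⁆) :
    IsCompl z (Φ.orthogonal z) := by
  refine (LinearMap.BilinForm.isCompl_orthogonal_iff_disjoint hrefl).2 ?_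
  refine Submodule.disjoint_def.2 fun x hxz hx => ?_
  have hxC : x ∈ Φ.orthogonal (derivedSeries K L 1).toSubmodule :=
    center_eq_orthogonal_derivedSeries hnd hinv ▸ h.le_center hxz
  have hxD : x ∈ (derivedSeries K L 1).toSubmodule := by
    rw [derivedSeries_eq_orthogonal_center hrefl hnd hinv]
    intro n hn
    obtain ⟨u, hu, d, hd, rfl⟩ := Submodule.mem_sup.1 (h.center_le hn)
    rw [map_add, LinearMap.add_apply, hx u hu, hxC d hd, add_zero]
  exact Submodule.disjoint_def.1 h.disjoint_derivedSeries x hxz hxD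

lemma SplitsCenter.center_inf_orthogonal_le (h : SplitsCenter z) (hrefl : Φ.IsRefl)
    (hnd : Φ.Nondegenerate) (hinv : ∀ x y z : L, Φ ⁅x, y⁆ z = Φ x ⁅y, z⁆) :
    (center K L).toSubmodule ⊓ Φ.orthogonal z ≤ (derivedSeries K L 1).toSubmodule := by
  have hmod := sup_inf_assoc_of_le z (h.derivedSeries_le_orthogonal hrefl hnd hinv)
  rw [sup_comm, (h.isCompl_orthogonal hrefl hnd hinv).inf_eq_bot, sup_bot_eq] at hmod
  exact hmod ▸ inf_le_inf_right _ h.center_le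

end OrthogonalOfCentralSplitting

lemma SplitsCenter.centerIn_orthogonal_isotropic {L : Type} [LieRing L] [LieAlgebra ℂ L]
    [FiniteDimensional ℂ L] {Φ : LinearMap.BilinForm ℂ L} {z : Submodule ℂ L} (h : SplitsCenter z)
    (hrefl : Φ.IsRefl) (hnd : Φ.Nondegenerate) (hinv : ∀ x y z : L, Φ ⁅x, y⁆ z = Φ x ⁅y, z⁆) :
    ∀ x ∈ centerIn L (Φ.orthogonal z), ∀ y ∈ centerIn L (Φ.orthogonal z), Φ x y = 0 := by
  have hZ := centerIn_le_center h.le_center (h.isCompl_orthogonal hrefl hnd hinv).codisjoint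
  intro x hx y hy
  have hyD := h.center_inf_orthogonal_le hrefl hnd hinv ⟨hZ hy, hy.1⟩
  rw [derivedSeries_eq_orthogonal_center hrefl hnd hinv] at hyD
  exact hyD x (hZ hx)

section Projection

variable {K L : Type*} [Field K] [LieRing L] [LieAlgebra K L]

lemma lie_eq_of_sub_mem_center {x x' y y' : L} (hx : x - x' ∈ center K L)
    (hy : y - y' ∈ center K L) : ⁅x, y⁆ = ⁅x', y'⁆ := by
  have hsplit : ⁅x, y⁆ - ⁅x', y'⁆ = -⁅y, x - x'⁆ + ⁅x', y - y'⁆ := by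
    rw [lie_skew, sub_lie, lie_sub]; abel
  rw [← sub_eq_zero, hsplit, (LieModule.mem_maxTrivSubmodule K L L _).1 hx,
    (LieModule.mem_maxTrivSubmodule K L L _).1 hy, neg_zero, add_zero]

lemma projection_lie {z W : Submodule K L} (hz : z ≤ (center K L).toSubmodule)
    (hW : (derivedSeries K L 1).toSubmodule ≤ W) (h : IsCompl W z) (x y : L) :
    W.projection z h ⁅x, y⁆ = ⁅W.projection z h x, W.projection z h y⁆ := by
  have hcentral : ∀ v, v - W.projection z h v ∈ center K L :=
    fun v => hz (Submodule.sub_projection_mem h v)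
  rw [lie_eq_of_sub_mem_center (hcentral x) (hcentral y)]
  exact Submodule.projection_apply_of_mem_left h
    (hW (LieSubmodule.lie_mem_lie (LieSubmodule.mem_top _) (LieSubmodule.mem_top _)))

end Projection

lemma injOn_and_map_projection_comp {R M N : Type*} [Ring R] [AddCommGroup M] [Module R M]
    [AddCommGroup N] [Module R N] (e : M ≃ₗ[R] N) {z l : Submodule R M} (hzl : IsCompl z l)
    {W : Submodule R N} (hW : IsCompl W (z.map (e : M →ₗ[R] N))) :
    Set.InjOn (W.projection _ hW ∘ₗ (e : M →ₗ[R] N)) l ∧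
      l.map (W.projection _ hW ∘ₗ (e : M →ₗ[R] N)) = W := by
  have hker : LinearMap.ker (W.projection _ hW ∘ₗ (e : M →ₗ[R] N)) = z := by
    rw [LinearMap.ker_comp, Submodule.ker_projection,
      Submodule.comap_map_eq_of_injective e.injective]
  have hrange : LinearMap.range (W.projection _ hW ∘ₗ (e : M →ₗ[R] N)) = W := by
    rw [LinearMap.range_comp_of_range_eq_top _ e.range, Submodule.range_projection]
  have hcompl : IsCompl (LinearMap.ker (W.projection _ hW ∘ₗ (e : M →ₗ[R] N))) l := by
    rw [hker]
    exact hzl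
  exact ⟨LinearMap.disjoint_ker_iff_injOn.1 hcompl.disjoint.symm,
    (Submodule.map_eq_range_iff.2 hcompl.codisjoint.symm).trans hrange⟩

theorem quadratic_reduction_unique_general (g g' : Type)
    [LieRing g] [LieAlgebra ℂ g] [FiniteDimensional ℂ g]
    [LieRing g'] [LieAlgebra ℂ g'] [FiniteDimensional ℂ g']
    (B : LinearMap.BilinForm ℂ g) (B' : LinearMap.BilinForm ℂ g')
    (hsymm : ∀ x y : g, B x y = B y x)
    (hinv : ∀ x y z : g, B ⁅x, y⁆ z = B x ⁅y, z⁆)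
    (hsymm' : ∀ x y : g', B' x y = B' y x)
    (hnd' : B'.Nondegenerate)
    (hinv' : ∀ x y z : g', B' ⁅x, y⁆ z = B' x ⁅y, z⁆)
    (z l : LieIdeal ℂ g)
    (hzc : z ≤ LieAlgebra.center ℂ g)
    (hinf : z.toSubmodule ⊓ l.toSubmodule = ⊥)
    (hsup : z.toSubmodule ⊔ l.toSubmodule = ⊤)
    (horth : ∀ x ∈ z, ∀ y ∈ l, B x y = 0)
    (hndl : (B.restrict l.toSubmodule).Nondegenerate)
    (hZl : ∀ x ∈ centerIn g l.toSubmodule, ∀ y ∈ centerIn g l.toSubmodule, B x y = 0)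
    (A : g ≃ₗ⁅ℂ⁆ g') :
    ∃ z' l' : Submodule ℂ g',
      z' = z.toSubmodule.map A.toLinearEquiv.toLinearMap ∧
      l' = orthogonalOf g' B' z' ∧
      (∀ x ∈ z', ∀ y : g', ⁅x, y⁆ = (0 : g')) ∧
      z' ⊓ l' = ⊥ ∧ z' ⊔ l' = ⊤ ∧
      (∀ x ∈ centerIn g' l', ∀ y ∈ centerIn g' l', B' x y = 0) ∧
      (∃ φ : g →ₗ[ℂ] g',
        Set.InjOn φ l.toSubmodule ∧
        l.toSubmodule.map φ = l' ∧
        (∀ x ∈ l, ∀ y ∈ l, φ ⁅x, y⁆ = ⁅φ x, φ y⁆)) ∧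
      ((∀ x y : g, B' (A x) (A y) = B x y) →
        ∃ φ : g →ₗ[ℂ] g',
          Set.InjOn φ l.toSubmodule ∧
          l.toSubmodule.map φ = l' ∧
          (∀ x ∈ l, ∀ y ∈ l, φ ⁅x, y⁆ = ⁅φ x, φ y⁆) ∧
          (∀ x ∈ l, ∀ y ∈ l, B' (φ x) (φ y) = B x y)) := by
  have hrefl' : B'.IsRefl := fun x y h => hsymm' x y ▸ h
  have hzl : IsCompl z.toSubmodule l.toSubmodule := ⟨disjoint_iff.2 hinf, codisjoint_iff.2 hsup⟩
  have hl : (center ℂ g).toSubmodule ⊓ l.toSubmodule ≤ (derivedSeries ℂ g 1).toSubmodule :=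
    (center_inf_le_centerIn _).trans
      (centerIn_le_derivedSeries l (fun x y h => hsymm x y ▸ h) hndl hinv hZl)
  have hsplit : SplitsCenter (z.toSubmodule.map (A.toLinearEquiv : g →ₗ[ℂ] g')) :=
    (splitsCenter_of_isCompl l ((LieSubmodule.toSubmodule_le_toSubmodule _ _).2 hzc) hzl hl).map A
  set z' := z.toSubmodule.map (A.toLinearEquiv : g →ₗ[ℂ] g')
  have hc : IsCompl z' (B'.orthogonal z') := hsplit.isCompl_orthogonal hrefl' hnd' hinv'
  set φ := (B'.orthogonal z').projection z' hc.symm ∘ₗ (A.toLinearEquiv : g →ₗ[ℂ] g')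
  obtain ⟨hinj, hmap⟩ := injOn_and_map_projection_comp A.toLinearEquiv hzl hc.symm
  have hlie : ∀ x ∈ l, ∀ y ∈ l, φ ⁅x, y⁆ = ⁅φ x, φ y⁆ := fun x _ y _ =>
    (congrArg _ (A.map_lie x y)).trans (projection_lie hsplit.le_center
      (hsplit.derivedSeries_le_orthogonal hrefl' hnd' hinv') hc.symm _ _)
  refine ⟨z', B'.orthogonal z', rfl, (orthogonalOf_eq_orthogonal hrefl' z').symm,
    fun x hx y => by rw [← lie_skew, (LieModule.mem_maxTrivSubmodule ℂ g' g' x).1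
      (hsplit.le_center hx) y, neg_zero],
    hc.inf_eq_bot, hc.sup_eq_top, hsplit.centerIn_orthogonal_isotropic hrefl' hnd' hinv',
    ⟨φ, hinj, hmap, hlie⟩, fun hiso => ⟨φ, hinj, hmap, hlie, fun x hx y hy => ?_⟩⟩
  have hφA : ∀ x ∈ l, φ x = A x := fun x hx => Submodule.projection_apply_of_mem_left hc.symm
    (by rintro _ ⟨w, hw, rfl⟩; exact (hiso w x).trans (horth w hw x hx))
  rw [hφA x hx, hφA y hy, hiso]

/-- **Uniqueness of the reduction under isomorphism.** Let `(g, B)` be a non-Abelian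
quadratic Lie algebra with reduction `g = z ⊕ l` (with `z` central, `l` nonzero
non-Abelian, the two summands orthogonal, both restrictions of `B` non-degenerate and
`Z(l)` totally isotropic).  Let `(g', B')` be a quadratic Lie algebra and
`A : g → g'` a Lie algebra isomorphism.  Then `g' = A(z) ⊕ A(z)⊥`, where `A(z)` is
central in `g'`, the center of `l' = A(z)⊥` is totally isotropic for `B'`, and `l` and
`l'` are isomorphic as Lie algebras; if moreover `A` preserves the forms then `l` and
`l'` are i-isomorphic. -/
theorem quadratic_reduction_unique (g g' : Type)
    [LieRing g] [LieAlgebra ℂ g] [FiniteDimensional ℂ g]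
    [LieRing g'] [LieAlgebra ℂ g'] [FiniteDimensional ℂ g']
    (B : LinearMap.BilinForm ℂ g) (B' : LinearMap.BilinForm ℂ g')
    (hsymm : ∀ x y : g, B x y = B y x)
    (hnd : B.Nondegenerate)
    (hinv : ∀ x y z : g, B ⁅x, y⁆ z = B x ⁅y, z⁆)
    (hsymm' : ∀ x y : g', B' x y = B' y x)
    (hnd' : B'.Nondegenerate)
    (hinv' : ∀ x y z : g', B' ⁅x, y⁆ z = B' x ⁅y, z⁆)
    (hnonab : ¬ IsLieAbelian g)
    (z l : LieIdeal ℂ g)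
    (hl0 : l ≠ ⊥)
    (hzc : z ≤ LieAlgebra.center ℂ g)
    (hinf : z.toSubmodule ⊓ l.toSubmodule = ⊥)
    (hsup : z.toSubmodule ⊔ l.toSubmodule = ⊤)
    (horth : ∀ x ∈ z, ∀ y ∈ l, B x y = 0)
    (hndz : (B.restrict z.toSubmodule).Nondegenerate)
    (hndl : (B.restrict l.toSubmodule).Nondegenerate)
    (hlnonab : ∃ x ∈ l, ∃ y ∈ l, ⁅x, y⁆ ≠ (0 : g))
    (hZl : ∀ x ∈ centerIn g l.toSubmodule, ∀ y ∈ centerIn g l.toSubmodule, B x y = 0)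
    (A : g ≃ₗ⁅ℂ⁆ g') :
    ∃ z' l' : Submodule ℂ g',
      z' = z.toSubmodule.map A.toLinearEquiv.toLinearMap ∧
      l' = orthogonalOf g' B' z' ∧
      (∀ x ∈ z', ∀ y : g', ⁅x, y⁆ = (0 : g')) ∧
      z' ⊓ l' = ⊥ ∧ z' ⊔ l' = ⊤ ∧
      (∀ x ∈ centerIn g' l', ∀ y ∈ centerIn g' l', B' x y = 0) ∧
      (∃ φ : g →ₗ[ℂ] g',
        Set.InjOn φ l.toSubmodule ∧
        l.toSubmodule.map φ = l' ∧
        (∀ x ∈ l, ∀ y ∈ l, φ ⁅x, y⁆ = ⁅φ x, φ y⁆)) ∧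
      ((∀ x y : g, B' (A x) (A y) = B x y) →
        ∃ φ : g →ₗ[ℂ] g',
          Set.InjOn φ l.toSubmodule ∧
          l.toSubmodule.map φ = l' ∧
          (∀ x ∈ l, ∀ y ∈ l, φ ⁅x, y⁆ = ⁅φ x, φ y⁆) ∧
          (∀ x ∈ l, ∀ y ∈ l, B' (φ x) (φ y) = B x y)) :=
  quadratic_reduction_unique_general g g' B B' hsymm hinv hsymm' hnd' hinv' z l hzc hinf hsup horth
    hndl hZl A
end

section
/- Let (g,B) be a non-Abelian quadratic Lie algebra. Then dim([g,g]) ≥ 3. -/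
/-!
Invariance of `B` puts the orthogonal of `[g, g]` inside the centre `𝔷(g)`, so the codimension
`c` of the centre is at most `d = dim [g, g]`. Conversely the bracket factors through
`⋀² (g ⧸ 𝔷(g))`, so `d ≤ c (c - 1) / 2`. A non-abelian `g` has `c ≠ 0`, and `c ≤ c (c - 1) / 2`
then forces `c ≥ 3`.
-/

open Module LieAlgebra

namespace LinearMap

variable {R M N : Type*} [CommRing R] [AddCommGroup M] [Module R M] [AddCommGroup N] [Module R N]

def toAlternatingMapFinTwo (f : M →ₗ[R] M →ₗ[R] N) (hf : ∀ x, f x x = 0) :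
    M [⋀^Fin 2]→ₗ[R] N where
  toFun v := f (v 0) (v 1)
  map_update_add' v i x y := by fin_cases i <;> simp
  map_update_smul' v i c x := by fin_cases i <;> simp
  map_eq_zero_of_eq' v i j hv hij := by
    fin_cases i <;> fin_cases j <;> simp_all

end LinearMap

namespace Submodule

variable {R M M' N : Type*} [CommRing R] [AddCommGroup M] [Module R M] [AddCommGroup M']
  [Module R M'] [AddCommGroup N] [Module R N]

def liftQ₂ (p : Submodule R M) (q : Submodule R M') (f : M →ₗ[R] M' →ₗ[R] N)
    (hp : p ≤ LinearMap.ker f) (hq : q ≤ LinearMap.ker f.flip) : M ⧸ p →ₗ[R] M' ⧸ q →ₗ[R] N :=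
  (q.liftQ (p.liftQ f hp).flip fun _ hy =>
    LinearMap.ext fun x => Quotient.induction_on p x fun x => LinearMap.congr_fun (hq hy) x).flip

end Submodule

namespace LieAlgebra

section Bracket

variable (K L : Type*) [Field K] [LieRing L] [LieAlgebra K L]

def centerQuotientBracket : (L ⧸ (center K L).toSubmodule) [⋀^Fin 2]→ₗ[K] L :=
  LinearMap.toAlternatingMapFinTwo
    ((center K L).toSubmodule.liftQ₂ (center K L).toSubmodule (LieModule.toEnd K L L)
      (fun z hz => LinearMap.ext fun y => show ⁅z, y⁆ = 0 by
        rw [← lie_skew, (LieModule.mem_maxTrivSubmodule K L L z).mp hz y, neg_zero])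
      (fun z hz => LinearMap.ext fun x => (LieModule.mem_maxTrivSubmodule K L L z).mp hz x))
    (fun x => Submodule.Quotient.induction_on _ x lie_self)

theorem derived_le_range_centerQuotientBracket :
    (⁅(⊤ : LieIdeal K L), ⊤⁆ : LieIdeal K L).toSubmodule ≤
      LinearMap.range (exteriorPower.alternatingMapLinearEquiv (centerQuotientBracket K L)) := by
  rw [LieSubmodule.lieIdeal_oper_eq_linear_span', Submodule.span_le]
  rintro _ ⟨x, -, y, -, rfl⟩
  refine ⟨exteriorPower.ιMulti K 2 ![Submodule.Quotient.mk x, Submodule.Quotient.mk y], ?_⟩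
  rw [exteriorPower.alternatingMapLinearEquiv_apply_ιMulti]
  rfl

variable [FiniteDimensional K L]

theorem finrank_derived_le_choose_two :
    finrank K (⁅(⊤ : LieIdeal K L), ⊤⁆ : LieIdeal K L).toSubmodule ≤
      (finrank K (L ⧸ (center K L).toSubmodule)).choose 2 :=
  calc _ ≤ finrank K (LinearMap.range
          (exteriorPower.alternatingMapLinearEquiv (centerQuotientBracket K L))) :=
        Submodule.finrank_mono (derived_le_range_centerQuotientBracket K L)
    _ ≤ finrank K (⋀[K]^2 (L ⧸ (center K L).toSubmodule)) := LinearMap.finrank_range_le _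
    _ = _ := exteriorPower.finrank_eq K 2

variable {L}

theorem finrank_quotient_center_ne_zero (h : ¬IsLieAbelian L) :
    finrank K (L ⧸ (center K L).toSubmodule) ≠ 0 := by
  rw [Ne, finrank_zero_iff, Submodule.Quotient.subsingleton_iff, LieSubmodule.toSubmodule_eq_top,
    ← isLieAbelian_iff_center_eq_top]
  exact h

end Bracket

section Invariant

variable {R K L : Type*} [LieRing L]

theorem orthogonal_derived_le_center [CommRing R] [LieAlgebra R L] (B : LinearMap.BilinForm R L)
    (hB : B.SeparatingRight) (hinv : ∀ x y z : L, B ⁅x, y⁆ z = B x ⁅y, z⁆) :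
    B.orthogonal (⁅(⊤ : LieIdeal R L), ⊤⁆ : LieIdeal R L).toSubmodule ≤
      (center R L).toSubmodule := by
  intro z hz
  rw [LinearMap.BilinForm.mem_orthogonal_iff] at hz
  refine (LieModule.mem_maxTrivSubmodule R L L z).mpr fun x => hB _ fun w => ?_
  rw [← hinv]
  exact hz _ (LieSubmodule.lie_mem_lie (LieSubmodule.mem_top w) (LieSubmodule.mem_top x))

theorem finrank_quotient_center_le_finrank_derived [Field K] [LieAlgebra K L]
    [FiniteDimensional K L] (B : LinearMap.BilinForm K L) (hB : B.SeparatingRight)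
    (hinv : ∀ x y z : L, B ⁅x, y⁆ z = B x ⁅y, z⁆) :
    finrank K (L ⧸ (center K L).toSubmodule) ≤
      finrank K (⁅(⊤ : LieIdeal K L), ⊤⁆ : LieIdeal K L).toSubmodule := by
  have h_orth := LinearMap.BilinForm.finrank_add_finrank_orthogonal' (B := B)
    (⁅(⊤ : LieIdeal K L), ⊤⁆ : LieIdeal K L).toSubmodule
  have h_center := Submodule.finrank_mono (orthogonal_derived_le_center B hB hinv)
  have h_quot := Submodule.finrank_quotient_add_finrank (center K L).toSubmodule
  omega

end Invariant

end LieAlgebra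

theorem Nat.three_le_of_le_choose_two {n : ℕ} (h₀ : n ≠ 0) (h : n ≤ n.choose 2) : 3 ≤ n := by
  by_contra! hn
  interval_cases n <;> simp_all

theorem derived_dim_ge_three_general (g : Type) [LieRing g] [LieAlgebra ℂ g]
    [FiniteDimensional ℂ g]
    (B : LinearMap.BilinForm ℂ g)
    (hnd : B.Nondegenerate)
    (hinv : ∀ x y z : g, B ⁅x, y⁆ z = B x ⁅y, z⁆)
    (hnonab : ¬ IsLieAbelian g) :
    3 ≤ finrank ℂ ↥(⁅(⊤ : LieIdeal ℂ g), (⊤ : LieIdeal ℂ g)⁆ : LieIdeal ℂ g).toSubmodule := by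
  have h_codim := finrank_quotient_center_le_finrank_derived B hnd.2 hinv
  have h_choose := finrank_derived_le_choose_two ℂ g
  exact (Nat.three_le_of_le_choose_two (finrank_quotient_center_ne_zero ℂ hnonab)
    (h_codim.trans h_choose)).trans h_codim

/-- Let `(g, B)` be a non-Abelian quadratic Lie algebra.  Then `dim [g, g] ≥ 3`. -/
theorem derived_dim_ge_three (g : Type) [LieRing g] [LieAlgebra ℂ g]
    [FiniteDimensional ℂ g]
    (B : LinearMap.BilinForm ℂ g)
    (hsymm : ∀ x y : g, B x y = B y x)
    (hnd : B.Nondegenerate)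
    (hinv : ∀ x y z : g, B ⁅x, y⁆ z = B x ⁅y, z⁆)
    (hnonab : ¬ IsLieAbelian g) :
    3 ≤ finrank ℂ ↥(⁅(⊤ : LieIdeal ℂ g), (⊤ : LieIdeal ℂ g)⁆ : LieIdeal ℂ g).toSubmodule :=
  derived_dim_ge_three_general g B hnd hinv hnonab
end

section
/- Let (g,B) be a solvable quadratic Lie algebra with dim(g) ≤ 3. Then g is Abelian. -/
/-!
Invariance and nondegeneracy of `B` make the centre `z` the `B`-orthogonal of `[g, g]`, so
`dim g/z = dim [g, g]`, and solvability forces `[g, g] ≠ g`; hence `dim g/z ≤ 2`. If `g/z` is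
spanned by the images of `x` and `y`, every bracket is a multiple of `[x, y]`, so
`dim [g, g] ≤ 1`, i.e. `dim g/z ≤ 1`; taking `y = x` then shows that all brackets vanish.
-/

open Module Submodule LieAlgebra

theorem Finset.exists_subset_pair_of_card_le_two {α : Type*} [DecidableEq α] [Nonempty α]
    {s : Finset α} (hs : s.card ≤ 2) : ∃ a b, s ⊆ {a, b} := by
  rcases s.eq_empty_or_nonempty with rfl | ⟨a, ha⟩
  · exact ⟨Classical.arbitrary α, Classical.arbitrary α, empty_subset _⟩
  obtain ⟨b, hb⟩ := card_le_one_iff_subset_singleton.mp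
    (show (s.erase a).card ≤ 1 by rw [card_erase_of_mem ha]; omega)
  exact ⟨a, b, (insert_erase ha).symm.subset.trans (insert_subset_insert a hb)⟩

theorem Submodule.exists_finset_card_eq_finrank_quotient_span_sup_eq_top {K V : Type*}
    [DivisionRing K] [AddCommGroup V] [Module K V] [FiniteDimensional K V] (p : Submodule K V) :
    ∃ t : Finset V, t.card = finrank K (V ⧸ p) ∧ span K (t : Set V) ⊔ p = ⊤ := by
  obtain ⟨q, hpq⟩ := p.exists_isCompl
  obtain ⟨t, -, hcard, hspan, -⟩ := exists_finset_span_eq_linearIndepOn K (q : Set V)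
  refine ⟨t, ?_, ?_⟩
  · rw [hcard, span_eq, (p.quotientEquivOfIsCompl q hpq).finrank_eq]
  · rw [hspan, span_eq, sup_comm, hpq.sup_eq_top]

namespace LieAlgebra

variable {K L : Type*}

section CommRing

variable [CommRing K] [LieRing L] [LieAlgebra K L]

theorem lie_mem_span_lie_of_span_pair_sup_center_eq_top {x y : L}
    (h : span K {x, y} ⊔ (center K L).toSubmodule = ⊤) (a b : L) : ⁅a, b⁆ ∈ K ∙ ⁅x, y⁆ := by
  have hdec : ∀ c : L, ∃ (α β : K) (u : L), (∀ w : L, ⁅w, u⁆ = 0) ∧ c = α • x + β • y + u := by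
    intro c
    obtain ⟨v, hv, u, hu, rfl⟩ := mem_sup.mp (h ▸ mem_top : c ∈ span K {x, y} ⊔ _)
    obtain ⟨α, β, rfl⟩ := mem_span_pair.mp hv
    exact ⟨α, β, u, (LieModule.mem_maxTrivSubmodule K L L u).mp hu, rfl⟩
  obtain ⟨α, β, u, hu, rfl⟩ := hdec a
  obtain ⟨γ, δ, v, hv, rfl⟩ := hdec b
  have hu' : ∀ w : L, ⁅u, w⁆ = 0 := fun w => by rw [← lie_skew, hu, neg_zero]
  refine mem_span_singleton.mpr ⟨α * δ - β * γ, ?_⟩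
  simp only [lie_add, add_lie, lie_smul, smul_lie, lie_self, hu', hv, smul_zero, add_zero,
    zero_add, smul_smul]
  rw [← lie_skew y x]
  module

theorem orthogonal_derivedSeries_one_eq_center {B : LinearMap.BilinForm K L}
    (hB : B.SeparatingRight) (hinv : ∀ x y z : L, B ⁅x, y⁆ z = B x ⁅y, z⁆) :
    B.orthogonal (derivedSeries K L 1).toSubmodule = (center K L).toSubmodule := by
  ext z
  rw [LinearMap.BilinForm.mem_orthogonal_iff, LieSubmodule.mem_toSubmodule,
    LieModule.mem_maxTrivSubmodule]
  have hD : (derivedSeries K L 1).toSubmodule = span K {⁅x, y⁆ | (x : L) (y : L)} :=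
    coe_derivedSeries_one_eq K L
  rw [hD]
  constructor
  · intro h x
    refine hB _ fun a => ?_
    rw [← hinv]
    exact h _ (subset_span ⟨a, x, rfl⟩)
  · intro h n hn
    have : span K {⁅x, y⁆ | (x : L) (y : L)} ≤ LinearMap.ker (B.flip z) := by
      rw [span_le]
      rintro _ ⟨a, b, rfl⟩
      simp [hinv, h]
    simpa using this hn

end CommRing

section Field

variable [Field K] [LieRing L] [LieAlgebra K L] [FiniteDimensional K L]

theorem finrank_derivedSeries_one_le_one_of_finrank_quotient_center_le_two
    (h : finrank K (L ⧸ (center K L).toSubmodule) ≤ 2) :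
    finrank K (derivedSeries K L 1).toSubmodule ≤ 1 := by
  classical
  obtain ⟨t, ht, hspan⟩ := exists_finset_card_eq_finrank_quotient_span_sup_eq_top
    (center K L).toSubmodule
  obtain ⟨x, y, hxy⟩ := Finset.exists_subset_pair_of_card_le_two (ht.trans_le h)
  have hpair : span K {x, y} ⊔ (center K L).toSubmodule = ⊤ := by
    refine eq_top_iff.mpr (hspan.ge.trans (sup_le_sup_right (span_mono ?_) _))
    exact Finset.coe_pair (a := x) (b := y) ▸ Finset.coe_subset.mpr hxy
  have hle : (derivedSeries K L 1).toSubmodule ≤ K ∙ ⁅x, y⁆ := by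
    refine (coe_derivedSeries_one_eq K L).le.trans (span_le.mpr ?_)
    rintro _ ⟨a, b, rfl⟩
    exact lie_mem_span_lie_of_span_pair_sup_center_eq_top hpair a b
  calc finrank K (derivedSeries K L 1).toSubmodule ≤ finrank K (K ∙ ⁅x, y⁆) := finrank_mono hle
    _ ≤ 1 := by simpa using finrank_span_le_card ({⁅x, y⁆} : Set L)

theorem isLieAbelian_of_finrank_quotient_center_le_one
    (h : finrank K (L ⧸ (center K L).toSubmodule) ≤ 1) : IsLieAbelian L := by
  obtain ⟨t, ht, hspan⟩ := exists_finset_card_eq_finrank_quotient_span_sup_eq_top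
    (center K L).toSubmodule
  obtain ⟨x, hx⟩ := Finset.card_le_one_iff_subset_singleton.mp (ht.trans_le h)
  have hpair : span K {x, x} ⊔ (center K L).toSubmodule = ⊤ := by
    refine eq_top_iff.mpr (hspan.ge.trans (sup_le_sup_right (span_mono ?_) _))
    rw [Set.pair_eq_singleton]
    exact_mod_cast hx
  refine ⟨fun a b => ?_⟩
  simpa using lie_mem_span_lie_of_span_pair_sup_center_eq_top hpair a b

theorem finrank_quotient_center_eq_finrank_derivedSeries_one {B : LinearMap.BilinForm K L}
    (hB : B.Nondegenerate) (hinv : ∀ x y z : L, B ⁅x, y⁆ z = B x ⁅y, z⁆) :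
    finrank K (L ⧸ (center K L).toSubmodule) = finrank K (derivedSeries K L 1).toSubmodule := by
  have horth := LinearMap.BilinForm.finrank_orthogonal hB (derivedSeries K L 1).toSubmodule
  rw [orthogonal_derivedSeries_one_eq_center hB.2 hinv] at horth
  have := (center K L).toSubmodule.finrank_quotient_add_finrank
  have := finrank_le (derivedSeries K L 1).toSubmodule
  omega

end Field

end LieAlgebra

theorem solvable_quadratic_dim_le_three_abelian_general (g : Type) [LieRing g] [LieAlgebra ℂ g]
    [FiniteDimensional ℂ g]
    (B : LinearMap.BilinForm ℂ g)
    (hnd : B.Nondegenerate)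
    (hinv : ∀ x y z : g, B ⁅x, y⁆ z = B x ⁅y, z⁆)
    (hsolv : LieAlgebra.IsSolvable g)
    (hdim : finrank ℂ g ≤ 3) :
    IsLieAbelian g := by
  rcases subsingleton_or_nontrivial g with hg | hg
  · infer_instance
  have hquot := finrank_quotient_center_eq_finrank_derivedSeries_one hnd hinv
  have hlt : finrank ℂ (derivedSeries ℂ g 1).toSubmodule < finrank ℂ g :=
    finrank_lt (by simpa using (derivedSeries_lt_top_of_solvable ℂ g).ne)
  have hder := finrank_derivedSeries_one_le_one_of_finrank_quotient_center_le_two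
    (K := ℂ) (L := g) (by omega)
  exact isLieAbelian_of_finrank_quotient_center_le_one (K := ℂ) (by omega)

/-- Let `(g, B)` be a solvable quadratic Lie algebra with `dim g ≤ 3`.  Then `g` is
Abelian. -/
theorem solvable_quadratic_dim_le_three_abelian (g : Type) [LieRing g] [LieAlgebra ℂ g]
    [FiniteDimensional ℂ g]
    (B : LinearMap.BilinForm ℂ g)
    (hsymm : ∀ x y : g, B x y = B y x)
    (hnd : B.Nondegenerate)
    (hinv : ∀ x y z : g, B ⁅x, y⁆ z = B x ⁅y, z⁆)
    (hsolv : LieAlgebra.IsSolvable g)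
    (hdim : finrank ℂ g ≤ 3) :
    IsLieAbelian g :=
  solvable_quadratic_dim_le_three_abelian_general g B hnd hinv hsolv hdim
end

section
/- Let (g,B) be a non-Abelian solvable quadratic Lie algebra with dim(g) = 4. Then there exists a basis {X, P, Q, Z} of g such that B(X,Z) = B(P,Q) = 1, B(X,Q) = B(P,Z) = 0, the subspaces spanned by {X,P} and by {Q,Z} are totally isotropic, and the Lie bracket is given by [X,P] = P, [X,Q] = −Q, [P,Q] = Z, with all other brackets of basis elements equal to zero. In other words, g is i-isomorphic to the diamond Lie algebra g_4. -/
/-!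
The orthogonal complement of the derived algebra `D = [g, g]` is the centre, by invariance and
nondegeneracy of `B`. If `B` were nondegenerate on `D`, then `g = D ⊕ D^⊥` would give
`[D, D] = [g, g] = D`, which is impossible in a solvable non-abelian Lie algebra; hence
`D ∩ D^⊥` contains a nonzero central isotropic vector `z`. Over `ℂ`, `z` extends to a basis
`(x, p, q, z)` made of two orthogonal hyperbolic pairs `(x, z)` and `(p, q)`. The trilinear form
`B([a, b], c)` is alternating and vanishes when one argument is central, so it is determined by
`α = B([x, p], q)`, which forces `[x, p] = α p`, `[x, q] = -α q`, `[p, q] = α z`. Finally `α ≠ 0`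
since `g` is not abelian, and `(x / α, p, q, α z)` is the required basis.
-/

open Module

namespace LinearMap.BilinForm

variable {K V : Type*} [Field K] [AddCommGroup V] [Module K V] {B : LinearMap.BilinForm K V}

/-- `(x, z)` and `(p, q)` are mutually orthogonal hyperbolic pairs. -/
structure IsHyperbolicFrame (B : LinearMap.BilinForm K V) (x p q z : V) : Prop where
  xx : B x x = 0
  xp : B x p = 0
  xq : B x q = 0
  xz : B x z = 1
  pp : B p p = 0
  pq : B p q = 1
  pz : B p z = 0
  qq : B q q = 0
  qz : B q z = 0
  zz : B z z = 0

namespace IsHyperbolicFrame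

variable {x p q z : V}

theorem pairings (hF : IsHyperbolicFrame B x p q z) (hB : B.IsSymm) :
    (B x x = 0 ∧ B x p = 0 ∧ B x q = 0 ∧ B x z = 1) ∧
      (B p x = 0 ∧ B p p = 0 ∧ B p q = 1 ∧ B p z = 0) ∧
      (B q x = 0 ∧ B q p = 1 ∧ B q q = 0 ∧ B q z = 0) ∧
      (B z x = 1 ∧ B z p = 0 ∧ B z q = 0 ∧ B z z = 0) := by
  simp only [hB.eq p x, hB.eq q x, hB.eq z x, hB.eq q p, hB.eq z p, hB.eq z q]
  exact ⟨⟨hF.xx, hF.xp, hF.xq, hF.xz⟩, ⟨hF.xp, hF.pp, hF.pq, hF.pz⟩,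
    ⟨hF.xq, hF.pq, hF.qq, hF.qz⟩, ⟨hF.xz, hF.pz, hF.qz, hF.zz⟩⟩

theorem gram (hF : IsHyperbolicFrame B x p q z) (hB : B.IsSymm) (i j : Fin 4) :
    B (![x, p, q, z] i) (![x, p, q, z] j) =
      ![![0, 0, 0, 1], ![0, 0, 1, 0], ![0, 1, 0, 0], ![1, 0, 0, 0]] i j := by
  fin_cases i <;> fin_cases j <;> simp [hF.pairings hB]

theorem linearIndependent (hF : IsHyperbolicFrame B x p q z) (hB : B.IsSymm) :
    LinearIndependent K ![x, p, q, z] := by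
  rw [Fintype.linearIndependent_iff]
  intro c hc i
  have key := congrArg (fun u => B u (![x, p, q, z] (Fin.rev i))) hc
  fin_cases i <;> simpa [Fin.sum_univ_four, hF.pairings hB] using key

noncomputable def basis (hF : IsHyperbolicFrame B x p q z) (hB : B.IsSymm)
    (hV : finrank K V = 4) : Basis (Fin 4) K V :=
  basisOfLinearIndependentOfCardEqFinrank (hF.linearIndependent hB) (by simp [hV])

@[simp]
theorem coe_basis (hF : IsHyperbolicFrame B x p q z) (hB : B.IsSymm) (hV : finrank K V = 4) :
    ⇑(hF.basis hB hV) = ![x, p, q, z] :=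
  coe_basisOfLinearIndependentOfCardEqFinrank _ _

theorem pairing_smul_add_eq (hF : IsHyperbolicFrame B x p q z) (hB : B.IsSymm)
    (hV : finrank K V = 4) (u : V) :
    B u z • x + B u q • p + B u p • q + B u x • z = u := by
  obtain ⟨a, b, c, d, rfl⟩ : ∃ a b c d : K, a • x + b • p + c • q + d • z = u :=
    ⟨_, _, _, _, by simpa [Fin.sum_univ_four, ← add_assoc] using (hF.basis hB hV).sum_repr u⟩
  simp [hF.pairings hB]

theorem rescale (hF : IsHyperbolicFrame B x p q z) {t : K} (ht : t ≠ 0) :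
    IsHyperbolicFrame B (t⁻¹ • x) p q (t • z) where
  xx := by simp [hF.xx]
  xp := by simp [hF.xp]
  xq := by simp [hF.xq]
  xz := by simp [hF.xz, ht]
  pp := hF.pp
  pq := hF.pq
  pz := by simp [hF.pz]
  qq := hF.qq
  qz := by simp [hF.qz]
  zz := by simp [hF.zz]

end IsHyperbolicFrame

theorem exists_ne_zero_isotropic [IsAlgClosed K] [NeZero (2 : K)] (B : LinearMap.BilinForm K V)
    (hV : 2 ≤ finrank K V) : ∃ v ≠ 0, B v v = 0 := by
  have : Nontrivial V := Module.nontrivial_of_finrank_pos (R := K) (by omega)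
  obtain ⟨w, hw⟩ := exists_ne (0 : V)
  by_cases hww : B w w = 0
  · exact ⟨w, hw, hww⟩
  obtain ⟨y, hwy⟩ := exists_linearIndependent_pair_of_one_lt_finrank (R := K) (by omega) hw
  -- `B (y - a • w) (y - a • w)` is a quadratic polynomial in `a` with leading coefficient `B w w`
  obtain ⟨a, ha⟩ := exists_quadratic_eq_zero hww (IsAlgClosed.exists_eq_mul_self _)
    (b := -(B w y + B y w)) (c := B y y)
  refine ⟨y - a • w, sub_ne_zero.mpr ((LinearIndependent.pair_iff' hw).mp hwy a).symm, ?_⟩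
  simp only [map_sub, map_smul, LinearMap.sub_apply, LinearMap.smul_apply, smul_eq_mul]
  linear_combination ha

theorem exists_isotropic_partner [NeZero (2 : K)] (hB : B.IsSymm) (hnd : B.Nondegenerate) {p : V}
    (hp : p ≠ 0) (hpp : B p p = 0) : ∃ q, B q q = 0 ∧ B p q = 1 := by
  obtain ⟨v, hpv⟩ : ∃ v, B p v ≠ 0 := by
    by_contra! h
    exact hp (hnd.1 p h)
  refine ⟨(B p v)⁻¹ • (v - (B v v / (2 * B p v)) • p), ?_, ?_⟩
  · simp only [map_sub, map_smul, LinearMap.sub_apply, LinearMap.smul_apply, smul_eq_mul, hpp,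
      hB.eq v p]
    field_simp
    ring
  · simp only [map_sub, map_smul, smul_eq_mul, hpp]
    field_simp
    ring

theorem exists_hyperbolic_pair [IsAlgClosed K] [NeZero (2 : K)] (hB : B.IsSymm)
    (hnd : B.Nondegenerate) (hV : 2 ≤ finrank K V) : ∃ p q, B p p = 0 ∧ B q q = 0 ∧ B p q = 1 := by
  obtain ⟨p, hp, hpp⟩ := B.exists_ne_zero_isotropic hV
  obtain ⟨q, hqq, hpq⟩ := exists_isotropic_partner hB hnd hp hpp
  exact ⟨p, q, hpp, hqq, hpq⟩

theorem nondegenerate_restrict_orthogonal [FiniteDimensional K V] (hB : B.IsRefl)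
    (hnd : B.Nondegenerate) {W : Submodule K V} (hW : (B.restrict W).Nondegenerate) :
    (B.restrict (B.orthogonal W)).Nondegenerate := by
  rw [restrict_nondegenerate_iff_isCompl_orthogonal hB, orthogonal_orthogonal hnd hB]
  exact (isCompl_orthogonal_of_restrict_nondegenerate hB hW).symm

theorem disjoint_orthogonal_span_pair (hB : B.IsSymm) {x z : V} (hxx : B x x = 0)
    (hzz : B z z = 0) (hxz : B x z = 1) :
    Disjoint (Submodule.span K {x, z}) (B.orthogonal (Submodule.span K {x, z})) := by
  rw [Submodule.disjoint_def]
  rintro _ hw hw'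
  obtain ⟨a, c, rfl⟩ := Submodule.mem_span_pair.mp hw
  rw [mem_orthogonal_iff] at hw'
  have hc := hw' x (Submodule.subset_span (by simp))
  have ha := hw' z (Submodule.subset_span (by simp))
  simp only [map_add, map_smul, smul_eq_mul, hxx, hzz, hxz, hB.eq z x] at hc ha
  simp_all

theorem exists_isHyperbolicFrame [FiniteDimensional K V] [IsAlgClosed K] [NeZero (2 : K)]
    (hB : B.IsSymm) (hnd : B.Nondegenerate) (hV : 4 ≤ finrank K V) {z : V} (hz : z ≠ 0)
    (hzz : B z z = 0) : ∃ x p q, IsHyperbolicFrame B x p q z := by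
  obtain ⟨x, hxx, hzx⟩ := exists_isotropic_partner hB hnd hz hzz
  rw [hB.eq] at hzx
  set H := Submodule.span K {x, z}
  have hH : (B.restrict H).Nondegenerate :=
    nondegenerate_restrict_of_disjoint_orthogonal B hB.isRefl
      (disjoint_orthogonal_span_pair hB hxx hzz hzx)
  have hdim : 2 ≤ finrank K (B.orthogonal H) := by
    classical
    have h2 : finrank K H ≤ 2 :=
      (finrank_span_le_card (R := K) ({x, z} : Set V)).trans (by simp [Finset.card_le_two])
    rw [finrank_orthogonal hnd]
    omega
  obtain ⟨p, q, hpp, hqq, hpq⟩ := exists_hyperbolic_pair (hB.restrict _)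
    (nondegenerate_restrict_orthogonal hB.isRefl hnd hH) hdim
  have hx : x ∈ H := Submodule.subset_span (by simp)
  have hz : z ∈ H := Submodule.subset_span (by simp)
  exact ⟨x, p, q, hxx, p.2 x hx, q.2 x hx, hzx, hpp, hpq, hB.eq _ _ ▸ p.2 z hz,
    hqq, hB.eq _ _ ▸ q.2 z hz, hzz⟩

end LinearMap.BilinForm

theorem LieIdeal.eq_bot_of_lie_self_eq_self {R L : Type*} [CommRing R] [LieRing L]
    [LieAlgebra R L] [LieAlgebra.IsSolvable L] {I : LieIdeal R L} (h : ⁅I, I⁆ = I) : I = ⊥ := by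
  obtain ⟨k, hk⟩ := LieAlgebra.IsSolvable.solvable R L
  have hstable : ∀ n, LieAlgebra.derivedSeriesOfIdeal R L n I = I := by
    intro n
    induction n with
    | zero => rfl
    | succ n ih => rw [LieAlgebra.derivedSeriesOfIdeal_succ, ih, h]
  rw [eq_bot_iff, ← hk, ← hstable k]
  exact LieAlgebra.derivedSeriesOfIdeal_mono le_top k

theorem LieAlgebra.isLieAbelian_of_basis {R L ι : Type*} [CommRing R] [LieRing L]
    [LieAlgebra R L] (b : Module.Basis ι R L) (h : ∀ i j, ⁅b i, b j⁆ = 0) : IsLieAbelian L := by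
  have : (LieModule.toEnd R L L : L →ₗ[R] L →ₗ[R] L) = 0 :=
    LinearMap.ext_basis b b fun i j => by simpa using h i j
  exact ⟨fun x y => by simpa using LinearMap.congr_fun₂ this x y⟩

namespace LinearMap.BilinForm

open LieAlgebra

variable {K L : Type*} [Field K] [LieRing L] [LieAlgebra K L] {B : LinearMap.BilinForm K L}

theorem apply_lie_self_right (hinv : ∀ x y z : L, B ⁅x, y⁆ z = B x ⁅y, z⁆) (a b : L) :
    B ⁅a, b⁆ b = 0 := by
  rw [hinv, lie_self, map_zero]

theorem apply_lie_self_left (hinv : ∀ x y z : L, B ⁅x, y⁆ z = B x ⁅y, z⁆) (a b : L) :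
    B ⁅a, b⁆ a = 0 := by
  rw [← lie_skew, map_neg, LinearMap.neg_apply, apply_lie_self_right hinv, neg_zero]

theorem apply_lie_of_mem_center (hinv : ∀ x y z : L, B ⁅x, y⁆ z = B x ⁅y, z⁆) {z : L}
    (hz : z ∈ center K L) (a b : L) : B ⁅a, b⁆ z = 0 := by
  rw [hinv, (LieModule.mem_maxTrivSubmodule K L L z).mp hz, map_zero]

theorem mem_center_of_mem_orthogonal_derivedSeries (hnd : B.Nondegenerate)
    (hinv : ∀ x y z : L, B ⁅x, y⁆ z = B x ⁅y, z⁆) {z : L}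
    (hz : z ∈ B.orthogonal (derivedSeries K L 1)) : z ∈ center K L := by
  refine (LieModule.mem_maxTrivSubmodule K L L z).mpr fun y => hnd.2 _ fun w => ?_
  rw [← hinv]
  exact hz _ (LieSubmodule.lie_mem_lie (LieSubmodule.mem_top w) (LieSubmodule.mem_top y))

theorem lie_derivedSeries_one_eq_of_disjoint [FiniteDimensional K L] (hB : B.IsRefl)
    (hnd : B.Nondegenerate) (hinv : ∀ x y z : L, B ⁅x, y⁆ z = B x ⁅y, z⁆)
    (hD : Disjoint (derivedSeries K L 1 : Submodule K L) (B.orthogonal (derivedSeries K L 1))) :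
    ⁅derivedSeries K L 1, derivedSeries K L 1⁆ = derivedSeries K L 1 := by
  set D := derivedSeries K L 1
  have hdecomp : ∀ x : L, ∃ u ∈ D, ∃ c ∈ center K L, u + c = x := by
    intro x
    have hx : x ∈ (D : Submodule K L) ⊔ B.orthogonal D := by
      rw [((isCompl_orthogonal_iff_disjoint hB).mpr hD).sup_eq_top]
      trivial
    obtain ⟨u, hu, c, hc, rfl⟩ := Submodule.mem_sup.mp hx
    exact ⟨u, hu, c, mem_center_of_mem_orthogonal_derivedSeries hnd hinv hc, rfl⟩
  refine le_antisymm (LieSubmodule.lie_le_left D D) ?_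
  change ⁅(⊤ : LieIdeal K L), ⊤⁆ ≤ ⁅D, D⁆
  rw [LieSubmodule.lie_le_iff]
  rintro x - y -
  obtain ⟨u, hu, c, hc, rfl⟩ := hdecomp x
  obtain ⟨u', hu', c', hc', rfl⟩ := hdecomp y
  rw [LieModule.mem_maxTrivSubmodule] at hc hc'
  simp only [lie_add, add_lie, hc, hc', ← lie_skew c u', neg_zero, add_zero]
  exact LieSubmodule.lie_mem_lie hu hu'

theorem exists_ne_zero_mem_center_isotropic [FiniteDimensional K L] [IsSolvable L]
    (hB : B.IsSymm) (hnd : B.Nondegenerate) (hinv : ∀ x y z : L, B ⁅x, y⁆ z = B x ⁅y, z⁆)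
    (hL : ¬ IsLieAbelian L) : ∃ z ≠ 0, z ∈ center K L ∧ B z z = 0 := by
  set D := derivedSeries K L 1
  have hD : ¬ Disjoint (D : Submodule K L) (B.orthogonal D) := fun hD => hL ⟨fun x y => by
    have hbot : D = ⊥ := LieIdeal.eq_bot_of_lie_self_eq_self
      (lie_derivedSeries_one_eq_of_disjoint hB.isRefl hnd hinv hD)
    have hxy : ⁅x, y⁆ ∈ D :=
      LieSubmodule.lie_mem_lie (LieSubmodule.mem_top x) (LieSubmodule.mem_top y)
    rwa [hbot, LieSubmodule.mem_bot] at hxy⟩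
  obtain ⟨z, hzD, hzD', hz⟩ : ∃ z ∈ (D : Submodule K L), z ∈ B.orthogonal D ∧ z ≠ 0 := by
    simpa [Submodule.disjoint_def] using hD
  exact ⟨z, hz, mem_center_of_mem_orthogonal_derivedSeries hnd hinv hzD', hzD' z hzD⟩

theorem IsHyperbolicFrame.lie_eq {x p q z : L} (hF : IsHyperbolicFrame B x p q z)
    (hB : B.IsSymm) (hinv : ∀ x y z : L, B ⁅x, y⁆ z = B x ⁅y, z⁆) (hV : finrank K L = 4)
    (hz : z ∈ center K L) :
    ⁅x, p⁆ = B ⁅x, p⁆ q • p ∧ ⁅x, q⁆ = -B ⁅x, p⁆ q • q ∧ ⁅p, q⁆ = B ⁅x, p⁆ q • z := by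
  have hqp : B ⁅x, q⁆ p = -B ⁅x, p⁆ q := by
    rw [hinv, hinv, ← lie_skew, map_neg]
  have hpqx : B ⁅p, q⁆ x = B ⁅x, p⁆ q := by
    rw [hB.eq, hinv]
  refine ⟨?_, ?_, ?_⟩
  · conv_lhs => rw [← hF.pairing_smul_add_eq hB hV ⁅x, p⁆]
    simp [apply_lie_of_mem_center hinv hz, apply_lie_self_left hinv, apply_lie_self_right hinv]
  · conv_lhs => rw [← hF.pairing_smul_add_eq hB hV ⁅x, q⁆]
    simp [apply_lie_of_mem_center hinv hz, apply_lie_self_left hinv, apply_lie_self_right hinv,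
      hqp]
  · conv_lhs => rw [← hF.pairing_smul_add_eq hB hV ⁅p, q⁆]
    simp [apply_lie_of_mem_center hinv hz, apply_lie_self_left hinv, apply_lie_self_right hinv,
      hpqx]

theorem exists_diamond_frame [FiniteDimensional K L] [IsAlgClosed K] [NeZero (2 : K)]
    [IsSolvable L] (hB : B.IsSymm) (hnd : B.Nondegenerate)
    (hinv : ∀ x y z : L, B ⁅x, y⁆ z = B x ⁅y, z⁆) (hL : ¬ IsLieAbelian L) (hV : finrank K L = 4) :
    ∃ x p q z, IsHyperbolicFrame B x p q z ∧ z ∈ center K L ∧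
      ⁅x, p⁆ = p ∧ ⁅x, q⁆ = -q ∧ ⁅p, q⁆ = z := by
  obtain ⟨z, hz0, hz, hzz⟩ := exists_ne_zero_mem_center_isotropic hB hnd hinv hL
  obtain ⟨x, p, q, hF⟩ := exists_isHyperbolicFrame hB hnd hV.ge hz0 hzz
  obtain ⟨hxp, hxq, hpq⟩ := hF.lie_eq hB hinv hV hz
  set α := B ⁅x, p⁆ q
  have hα : α ≠ 0 := by
    intro hα0
    refine hL (isLieAbelian_of_basis (hF.basis hB hV) fun i j => ?_)
    have hz' := (LieModule.mem_maxTrivSubmodule K L L z).mp hz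
    fin_cases i <;> fin_cases j <;>
      simp [hxp, hxq, hpq, hα0, hz', ← lie_skew p x, ← lie_skew q x, ← lie_skew q p,
        ← lie_skew z x, ← lie_skew z p, ← lie_skew z q]
  refine ⟨α⁻¹ • x, p, q, α • z, hF.rescale hα, (center K L).smul_mem α hz, ?_, ?_, hpq⟩
  · rw [smul_lie, hxp, inv_smul_smul₀ hα]
  · rw [smul_lie, hxq, neg_smul, smul_neg, inv_smul_smul₀ hα]

end LinearMap.BilinForm

/-- Let `(g, B)` be a non-Abelian solvable quadratic Lie algebra of dimension `4`.  Then
there is a basis `{X, P, Q, Z}` (here `b 0 = X`, `b 1 = P`, `b 2 = Q`, `b 3 = Z`) with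
`B(X,Z) = B(P,Q) = 1` and all other values of `B` on basis pairs zero (in particular the
spans of `{X, P}` and `{Q, Z}` are totally isotropic), and brackets `[X,P] = P`,
`[X,Q] = -Q`, `[P,Q] = Z`, all other brackets of basis elements zero; i.e. `g` is
i-isomorphic to the diamond Lie algebra `g₄`. -/
theorem solvable_quadratic_dim_four (g : Type) [LieRing g] [LieAlgebra ℂ g]
    [FiniteDimensional ℂ g]
    (B : LinearMap.BilinForm ℂ g)
    (hsymm : ∀ x y : g, B x y = B y x)
    (hnd : B.Nondegenerate)
    (hinv : ∀ x y z : g, B ⁅x, y⁆ z = B x ⁅y, z⁆)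
    (hsolv : LieAlgebra.IsSolvable g)
    (hnonab : ¬ IsLieAbelian g)
    (hdim : finrank ℂ g = 4) :
    ∃ b : Basis (Fin 4) ℂ g,
      (∀ i j, B (b i) (b j) =
        ![![0, 0, 0, 1],
          ![0, 0, 1, 0],
          ![0, 1, 0, 0],
          ![1, 0, 0, 0]] i j) ∧
      (∀ i j, ⁅b i, b j⁆ =
        ![![0, b 1, -(b 2), 0],
          ![-(b 1), 0, b 3, 0],
          ![b 2, -(b 3), 0, 0],
          ![(0 : g), 0, 0, 0]] i j) := by
  have hB : B.IsSymm := ⟨hsymm⟩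
  obtain ⟨x, p, q, z, hF, hz, hxp, hxq, hpq⟩ :=
    LinearMap.BilinForm.exists_diamond_frame hB hnd hinv hnonab hdim
  have hz' := (LieModule.mem_maxTrivSubmodule ℂ g g z).mp hz
  refine ⟨hF.basis hB hdim, fun i j => by simpa using hF.gram hB i j, fun i j => ?_⟩
  fin_cases i <;> fin_cases j <;>
    simp [hxp, hxq, hpq, hz', ← lie_skew p x, ← lie_skew q x, ← lie_skew q p,
      ← lie_skew z x, ← lie_skew z p, ← lie_skew z q]
end

section
/- Let (g,B) be a non-Abelian solvable quadratic Lie algebra with dim(g) = 4. Then the center Z(g) of g is totally isotropic for B, dim([g,g]) = 3, and dim(Z(g)) = 1. -/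
/-!
Invariance of `B` makes the center the orthogonal of the derived ideal `[g, g]`, so
`dim Z(g) + dim [g, g] = 4`. If `dim [g, g] ≤ 2` the center has codimension at most two, so
`g = Z(g) + span {e, f}` and `[g, g]` is spanned by the single bracket `[e, f]`; codimension one
even makes `g` abelian. Solvability gives `[g, g] ≠ g`, hence `dim [g, g] = 3` and `dim Z(g) = 1`.
If `Z(g) ⊄ [g, g]`, then `g = [g, g] + Z(g)`, so `[g, g]` is perfect, which a solvable algebra
forbids; thus `Z(g) ⊆ [g, g] = Z(g)^⊥`.
-/

open Module LieAlgebra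

namespace Submodule

variable {K V : Type*} [Field K] [AddCommGroup V] [Module K V] [FiniteDimensional K V]

theorem exists_sup_span_range_eq_top (p : Submodule K V) {n : ℕ}
    (h : finrank K V ≤ finrank K p + n) :
    ∃ v : Fin n → V, p ⊔ span K (Set.range v) = ⊤ := by
  obtain ⟨W, hW⟩ := p.exists_isCompl
  have hWn : finrank K W ≤ n := by have := finrank_add_eq_of_isCompl hW; omega
  let b := finBasis K W
  refine ⟨fun i => if hi : (i : ℕ) < finrank K W then b ⟨i, hi⟩ else 0, ?_⟩
  refine eq_top_iff.2 (hW.sup_eq_top ▸ sup_le_sup_left ?_ p)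
  intro w hw
  rw [← Subtype.coe_mk w hw, ← b.sum_repr ⟨w, hw⟩, coe_sum]
  refine sum_mem fun i _ => smul_mem _ _ (subset_span ⟨⟨i, i.2.trans_le hWn⟩, ?_⟩)
  simp

theorem exists_sup_span_pair_eq_top (p : Submodule K V) (h : finrank K V ≤ finrank K p + 2) :
    ∃ e f : V, p ⊔ span K {e, f} = ⊤ := by
  obtain ⟨v, hv⟩ := p.exists_sup_span_range_eq_top h
  exact ⟨v 0, v 1, by rwa [Fin.range_fin_succ, Set.range_unique] at hv⟩

theorem exists_sup_span_singleton_eq_top (p : Submodule K V)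
    (h : finrank K V ≤ finrank K p + 1) : ∃ e : V, p ⊔ span K {e} = ⊤ := by
  obtain ⟨v, hv⟩ := p.exists_sup_span_range_eq_top h
  exact ⟨v 0, by rwa [Set.range_unique] at hv⟩

theorem le_of_sup_ne_top_of_finrank_add_one_eq {p q : Submodule K V}
    (hp : finrank K p + 1 = finrank K V) (h : p ⊔ q ≠ ⊤) : q ≤ p := by
  by_contra hqp
  have hlt : p < p ⊔ q := left_lt_sup.2 hqp
  exact h (eq_top_of_finrank_eq (le_antisymm (finrank_le _)
    (hp ▸ finrank_lt_finrank_of_lt hlt)))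

end Submodule

namespace LieAlgebra

open Submodule LieSubmodule

section CommRing

variable {R L : Type*} [CommRing R] [LieRing L] [LieAlgebra R L]

theorem lie_eq_zero_of_mem_center_right {z : L} (hz : z ∈ center R L) (x : L) : ⁅x, z⁆ = 0 :=
  (LieModule.mem_maxTrivSubmodule R L L z).1 hz x

theorem lie_eq_zero_of_mem_center_left {z : L} (hz : z ∈ center R L) (x : L) :
    ⁅z, x⁆ = 0 := by
  rw [← lie_skew, lie_eq_zero_of_mem_center_right hz, neg_zero]

theorem lie_top_top_eq_bot_iff :
    (⁅(⊤ : LieIdeal R L), ⊤⁆ : LieIdeal R L) = ⊥ ↔ IsLieAbelian L := by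
  simp only [lie_eq_bot_iff, LieSubmodule.mem_top, true_implies]
  exact ⟨fun h => ⟨h⟩, fun h => h.trivial⟩

theorem lie_top_top_le_span_lie_of_center_sup_span_pair_eq_top {e f : L}
    (h : (center R L).toSubmodule ⊔ span R {e, f} = ⊤) :
    (⁅(⊤ : LieIdeal R L), ⊤⁆ : LieIdeal R L).toSubmodule ≤ span R {⁅e, f⁆} := by
  have decomp (x : L) : ∃ z ∈ center R L, ∃ a b : R, z + (a • e + b • f) = x := by
    obtain ⟨z, hz, w, hw, rfl⟩ := mem_sup.1 (h ▸ Submodule.mem_top : x ∈ _)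
    obtain ⟨a, b, rfl⟩ := mem_span_pair.1 hw
    exact ⟨z, hz, a, b, rfl⟩
  rw [lieIdeal_oper_eq_linear_span']
  refine span_le.2 ?_
  rintro _ ⟨x, -, y, -, rfl⟩
  obtain ⟨z, hz, a, b, rfl⟩ := decomp x
  obtain ⟨z', hz', a', b', rfl⟩ := decomp y
  have hbracket : ⁅z + (a • e + b • f), z' + (a' • e + b' • f)⁆ =
      (a * b' - b * a') • ⁅e, f⁆ := by
    simp only [add_lie, lie_add, lie_smul, smul_lie, lie_self, smul_zero,
      lie_eq_zero_of_mem_center_left hz, lie_eq_zero_of_mem_center_right hz', zero_add, smul_smul]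
    rw [← lie_skew e f]
    module
  rw [hbracket]
  exact smul_mem _ _ (mem_span_singleton_self _)

theorem lie_top_top_eq_lie_self_of_sup_center_eq_top {I : LieIdeal R L}
    (h : I ⊔ center R L = ⊤) :
    (⁅(⊤ : LieIdeal R L), ⊤⁆ : LieIdeal R L) = ⁅I, I⁆ := by
  have hleft : ⁅center R L, I ⊔ center R L⁆ = ⊥ :=
    (lie_eq_bot_iff _ _).2 fun z hz _ _ => lie_eq_zero_of_mem_center_left hz _
  have hright : ⁅I, center R L⁆ = ⊥ :=
    (lie_eq_bot_iff _ _).2 fun x _ _ hz => lie_eq_zero_of_mem_center_right hz x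
  rw [← h, sup_lie, hleft, lie_sup, hright, sup_bot_eq, sup_bot_eq]

theorem _root_.LieIdeal.eq_bot_of_lie_self_eq [IsSolvable L] {I : LieIdeal R L}
    (h : ⁅I, I⁆ = I) : I = ⊥ := by
  have hle (k : ℕ) : I ≤ derivedSeries R L k := by
    induction k with
    | zero => exact le_top
    | succ k ih =>
      rw [derivedSeries_def, derivedSeriesOfIdeal_succ, ← derivedSeries_def, ← h]
      exact mono_lie ih ih
  obtain ⟨k, hk⟩ := IsSolvable.solvable R L
  exact eq_bot_iff.2 (hk ▸ hle k)

theorem lie_top_top_sup_center_ne_top [IsSolvable L] (h : ¬IsLieAbelian L) :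
    (⁅(⊤ : LieIdeal R L), ⊤⁆ : LieIdeal R L).toSubmodule ⊔ (center R L).toSubmodule
      ≠ ⊤ := by
  rw [← sup_toSubmodule, Ne, toSubmodule_eq_top]
  intro hsup
  have hperfect := (lie_top_top_eq_lie_self_of_sup_center_eq_top hsup).symm
  exact h (lie_top_top_eq_bot_iff.1 (LieIdeal.eq_bot_of_lie_self_eq hperfect))

theorem center_toSubmodule_eq_orthogonal (B : LinearMap.BilinForm R L)
    (hsymm : ∀ x y : L, B x y = B y x) (hsep : B.SeparatingLeft)
    (hinv : ∀ x y z : L, B ⁅x, y⁆ z = B x ⁅y, z⁆) :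
    (center R L).toSubmodule =
      B.orthogonal (⁅(⊤ : LieIdeal R L), ⊤⁆ : LieIdeal R L).toSubmodule := by
  ext z
  rw [LinearMap.BilinForm.mem_orthogonal_iff, mem_toSubmodule, LieModule.mem_maxTrivSubmodule]
  constructor
  · intro hz d hd
    rw [lieIdeal_oper_eq_linear_span'] at hd
    refine span_induction ?_ ?_ ?_ ?_ hd
    · rintro _ ⟨x, -, y, -, rfl⟩
      exact (hinv x y z).trans (by rw [hz y, map_zero])
    · exact LinearMap.map_zero₂ _ _
    · intro _ _ _ _ hx hy
      exact (LinearMap.map_add₂ _ _ _ _).trans (by rw [hx, hy, add_zero])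
    · intro a _ _ hx
      exact (LinearMap.map_smul₂ _ _ _ _).trans (by rw [hx, smul_zero])
  · intro hz x
    refine hsep _ fun w => ?_
    rw [hsymm, ← hinv]
    exact hz _ (lie_mem_lie (mem_top w) (mem_top x))

end CommRing

section Field

variable {K L : Type*} [Field K] [LieRing L] [LieAlgebra K L] [FiniteDimensional K L]

theorem finrank_lie_top_top_le_one_of_finrank_le_finrank_center_add_two
    (h : finrank K L ≤ finrank K (center K L).toSubmodule + 2) :
    finrank K (⁅(⊤ : LieIdeal K L), ⊤⁆ : LieIdeal K L).toSubmodule ≤ 1 := by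
  obtain ⟨e, f, hef⟩ := exists_sup_span_pair_eq_top _ h
  exact (finrank_mono (lie_top_top_le_span_lie_of_center_sup_span_pair_eq_top hef)).trans
    (by simpa using finrank_span_le_card (R := K) {⁅e, f⁆})

theorem isLieAbelian_of_finrank_le_finrank_center_add_one
    (h : finrank K L ≤ finrank K (center K L).toSubmodule + 1) : IsLieAbelian L := by
  obtain ⟨e, he⟩ := exists_sup_span_singleton_eq_top _ h
  rw [← Set.pair_eq_singleton] at he
  have hle := lie_top_top_le_span_lie_of_center_sup_span_pair_eq_top he
  rw [lie_self, span_zero_singleton, le_bot_iff, toSubmodule_eq_bot] at hle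
  exact lie_top_top_eq_bot_iff.1 hle

theorem finrank_lie_top_top_lt [IsSolvable L] [Nontrivial L] :
    finrank K (⁅(⊤ : LieIdeal K L), ⊤⁆ : LieIdeal K L).toSubmodule < finrank K L := by
  refine Submodule.finrank_lt ?_
  rw [Ne, toSubmodule_eq_top]
  exact (derivedSeries_lt_top_of_solvable K L).ne

end Field

end LieAlgebra

/-- Let `(g, B)` be a non-Abelian solvable quadratic Lie algebra of dimension `4`.  Then
the center `Z(g)` is totally isotropic for `B`, `dim [g, g] = 3` and `dim Z(g) = 1`. -/
theorem solvable_quadratic_dim_four_center (g : Type) [LieRing g] [LieAlgebra ℂ g]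
    [FiniteDimensional ℂ g]
    (B : LinearMap.BilinForm ℂ g)
    (hsymm : ∀ x y : g, B x y = B y x)
    (hnd : B.Nondegenerate)
    (hinv : ∀ x y z : g, B ⁅x, y⁆ z = B x ⁅y, z⁆)
    (hsolv : LieAlgebra.IsSolvable g)
    (hnonab : ¬ IsLieAbelian g)
    (hdim : finrank ℂ g = 4) :
    (∀ x ∈ LieAlgebra.center ℂ g, ∀ y ∈ LieAlgebra.center ℂ g, B x y = 0) ∧
    finrank ℂ ↥(⁅(⊤ : LieIdeal ℂ g), (⊤ : LieIdeal ℂ g)⁆ : LieIdeal ℂ g).toSubmodule = 3 ∧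
    finrank ℂ ↥(LieAlgebra.center ℂ g).toSubmodule = 1 := by
  have hcenter := center_toSubmodule_eq_orthogonal B hsymm hnd.1 hinv
  set D := (⁅(⊤ : LieIdeal ℂ g), ⊤⁆ : LieIdeal ℂ g).toSubmodule
  set Z := (center ℂ g).toSubmodule
  have hZ : finrank ℂ Z = 4 - finrank ℂ D := by
    rw [hcenter, LinearMap.BilinForm.finrank_orthogonal hnd, hdim]
  have : Nontrivial g := finrank_pos_iff (R := ℂ).1 (by omega)
  have hD_lt : finrank ℂ D < 4 := hdim ▸ finrank_lie_top_top_lt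
  have hD_gt_one : 1 < finrank ℂ D := by
    by_contra h
    exact hnonab (isLieAbelian_of_finrank_le_finrank_center_add_one
      (show finrank ℂ g ≤ finrank ℂ Z + 1 by omega))
  have hD_ne_two : finrank ℂ D ≠ 2 := fun h => by
    have : finrank ℂ D ≤ 1 := finrank_lie_top_top_le_one_of_finrank_le_finrank_center_add_two
      (show finrank ℂ g ≤ finrank ℂ Z + 2 by omega)
    omega
  have hD : finrank ℂ D = 3 := by omega
  have hZD : Z ≤ D := Submodule.le_of_sup_ne_top_of_finrank_add_one_eq (by omega)
    (lie_top_top_sup_center_ne_top hnonab)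
  refine ⟨fun x hx y hy => ?_, hD, by omega⟩
  rw [hsymm]
  exact (hcenter ▸ hx : x ∈ B.orthogonal D) y (hZD hy)
end

section
/- Every skew-symmetric derivation of the diamond Lie algebra g_4 is inner: if g_4 has basis {X,P,Q,Z} with brackets [X,P]=P, [X,Q]=−Q, [P,Q]=Z and invariant form B given by B(X,Z)=B(P,Q)=1 (other values on basis pairs zero), and D is a derivation of g_4 satisfying B(D(U),V) = −B(U,D(V)) for all U,V ∈ g_4, then there exists W ∈ g_4 such that D = ad(W); indeed D = ad(aX − yP + zQ) for suitable a, y, z ∈ ℂ. -/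
/-!
Modulo inner derivations, the derivations of the diamond algebra are spanned by `X ↦ Z` and the
grading derivation `P ↦ P, Q ↦ Q, Z ↦ 2Z`: the derivation identity on `[X,P] = P`,
`[X,Q] = -Q` and `[P,Q] = Z` already fixes every other coordinate of `D` (dividing by 2 on the
way). Skew-symmetry tested on `(X, X)` and on `(P, Q)` kills exactly these two outer directions.
-/

structure IsDiamondBasis {K g : Type*} [Field K] [LieRing g] [LieAlgebra K g]
    (b : Module.Basis (Fin 4) K g) : Prop where
  lie_X_P : ⁅b 0, b 1⁆ = b 1
  lie_X_Q : ⁅b 0, b 2⁆ = -b 2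
  lie_P_Q : ⁅b 1, b 2⁆ = b 3
  lie_X_Z : ⁅b 0, b 3⁆ = 0
  lie_P_Z : ⁅b 1, b 3⁆ = 0
  lie_Q_Z : ⁅b 2, b 3⁆ = 0

def diamondGram (K : Type*) [Field K] : Matrix (Fin 4) (Fin 4) K :=
  !![0, 0, 0, 1; 0, 0, 1, 0; 0, 1, 0, 0; 1, 0, 0, 0]

section

variable {K g : Type*} [Field K] [AddCommGroup g] [Module K g] {b : Module.Basis (Fin 4) K g}

theorem LinearMap.BilinForm.apply_eq_of_diamondGram {B : LinearMap.BilinForm K g}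
    (hB : ∀ i j, B (b i) (b j) = diamondGram K i j) (u v : g) :
    B u v = b.repr u 0 * b.repr v 3 + b.repr u 1 * b.repr v 2 + b.repr u 2 * b.repr v 1 +
      b.repr u 3 * b.repr v 0 := by
  conv_lhs => rw [← b.sum_repr u, ← b.sum_repr v]
  simp only [Fin.sum_univ_four, map_add, map_smul, LinearMap.add_apply, LinearMap.smul_apply, hB]
  simp [diamondGram]
  ring

end

namespace IsDiamondBasis

variable {K g : Type*} [Field K] [LieRing g] [LieAlgebra K g] {b : Module.Basis (Fin 4) K g}

theorem of_lie_eq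
    (hbr : ∀ i j, ⁅b i, b j⁆ =
      ![![0, b 1, -(b 2), 0],
        ![-(b 1), 0, b 3, 0],
        ![b 2, -(b 3), 0, 0],
        ![(0 : g), 0, 0, 0]] i j) :
    IsDiamondBasis b :=
  ⟨by simpa using hbr 0 1, by simpa using hbr 0 2, by simpa using hbr 1 2,
    by simpa using hbr 0 3, by simpa using hbr 1 3, by simpa using hbr 2 3⟩

theorem lie_eq (hb : IsDiamondBasis b) (u v : g) :
    ⁅u, v⁆ = (b.repr u 0 * b.repr v 1 - b.repr u 1 * b.repr v 0) • b 1 +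
      (b.repr u 2 * b.repr v 0 - b.repr u 0 * b.repr v 2) • b 2 +
      (b.repr u 1 * b.repr v 2 - b.repr u 2 * b.repr v 1) • b 3 := by
  have h10 : ⁅b 1, b 0⁆ = -b 1 := by rw [← lie_skew, hb.lie_X_P]
  have h20 : ⁅b 2, b 0⁆ = b 2 := by rw [← lie_skew, hb.lie_X_Q, neg_neg]
  have h21 : ⁅b 2, b 1⁆ = -b 3 := by rw [← lie_skew, hb.lie_P_Q]
  have h30 : ⁅b 3, b 0⁆ = 0 := by rw [← lie_skew, hb.lie_X_Z, neg_zero]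
  have h31 : ⁅b 3, b 1⁆ = 0 := by rw [← lie_skew, hb.lie_P_Z, neg_zero]
  have h32 : ⁅b 3, b 2⁆ = 0 := by rw [← lie_skew, hb.lie_Q_Z, neg_zero]
  conv_lhs => rw [← b.sum_repr u, ← b.sum_repr v]
  simp only [Fin.sum_univ_four, lie_add, add_lie, smul_lie, lie_smul, hb.lie_X_P, hb.lie_X_Q,
    hb.lie_P_Q, hb.lie_X_Z, hb.lie_P_Z, hb.lie_Q_Z, h10, h20, h21, h30, h31, h32, lie_self]
  module

theorem derivation_apply_basis (hK : ringChar K ≠ 2) (hb : IsDiamondBasis b) {D : g →ₗ[K] g}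
    (hder : ∀ x y : g, D ⁅x, y⁆ = ⁅D x, y⁆ + ⁅x, D y⁆) :
    ∃ x y z p q : K, D (b 0) = x • b 1 + y • b 2 + z • b 3 ∧ D (b 1) = p • b 1 - y • b 3 ∧
      D (b 2) = q • b 2 - x • b 3 ∧ D (b 3) = (p + q) • b 3 := by
  have two_torsion {a : K} (h : a = -a) : a = 0 :=
    (Ring.eq_self_iff_eq_zero_of_char_ne_two hK).1 h.symm
  have coord {x y : g} (h : x = y) (k : Fin 4) : b.repr x k = b.repr y k := by rw [h]
  have d01 : D (b 1) = ⁅D (b 0), b 1⁆ + ⁅b 0, D (b 1)⁆ := by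
    simpa [hb.lie_X_P] using hder (b 0) (b 1)
  have d02 : -D (b 2) = ⁅D (b 0), b 2⁆ + ⁅b 0, D (b 2)⁆ := by
    simpa [hb.lie_X_Q] using hder (b 0) (b 2)
  have d12 : D (b 3) = ⁅D (b 1), b 2⁆ + ⁅b 1, D (b 2)⁆ := by
    simpa [hb.lie_P_Q] using hder (b 1) (b 2)
  have h00 : b.repr (D (b 0)) 0 = 0 := by simpa [hb.lie_eq] using coord d01 1
  have h10 : b.repr (D (b 1)) 0 = 0 := by simpa [hb.lie_eq] using coord d01 0
  have h12 : b.repr (D (b 1)) 2 = 0 := two_torsion (by simpa [hb.lie_eq] using coord d01 2)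
  have h13 : b.repr (D (b 1)) 3 = -b.repr (D (b 0)) 2 := by simpa [hb.lie_eq] using coord d01 3
  have h20 : b.repr (D (b 2)) 0 = 0 := by simpa [hb.lie_eq] using coord d02 0
  have h21 : b.repr (D (b 2)) 1 = 0 := two_torsion (by simpa [hb.lie_eq] using (coord d02 1).symm)
  have h23 : b.repr (D (b 2)) 3 = -b.repr (D (b 0)) 1 :=
    neg_eq_iff_eq_neg.1 (by simpa [hb.lie_eq] using coord d02 3)
  have h30 : b.repr (D (b 3)) 0 = 0 := by simpa [hb.lie_eq] using coord d12 0
  have h31 : b.repr (D (b 3)) 1 = 0 := by simpa [hb.lie_eq, h20] using coord d12 1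
  have h32 : b.repr (D (b 3)) 2 = 0 := by simpa [hb.lie_eq, h10] using coord d12 2
  have h33 : b.repr (D (b 3)) 3 = b.repr (D (b 1)) 1 + b.repr (D (b 2)) 2 := by
    simpa [hb.lie_eq] using coord d12 3
  refine ⟨b.repr (D (b 0)) 1, b.repr (D (b 0)) 2, b.repr (D (b 0)) 3, b.repr (D (b 1)) 1,
    b.repr (D (b 2)) 2, ?_, ?_, ?_, ?_⟩ <;> refine b.ext_elem fun k => ?_ <;> fin_cases k <;>
    simp [h00, h10, h12, h13, h20, h21, h23, h30, h31, h32, h33]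

theorem skew_derivation_eq_ad (hK : ringChar K ≠ 2) (hb : IsDiamondBasis b)
    {B : LinearMap.BilinForm K g} (hB : ∀ i j, B (b i) (b j) = diamondGram K i j)
    {D : g →ₗ[K] g} (hder : ∀ x y : g, D ⁅x, y⁆ = ⁅D x, y⁆ + ⁅x, D y⁆)
    (hskew : ∀ x y : g, B (D x) y = -(B x (D y))) :
    ∃ a y z : K, D = LieAlgebra.ad K g (a • b 0 - y • b 1 + z • b 2) := by
  obtain ⟨x, y, z, p, q, hX, hP, hQ, hZ⟩ := hb.derivation_apply_basis hK hder
  have hz : z = 0 := (Ring.eq_self_iff_eq_zero_of_char_ne_two hK).1 <| by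
    simpa [hX, LinearMap.BilinForm.apply_eq_of_diamondGram hB] using (hskew (b 0) (b 0)).symm
  have hq : q = -p := neg_eq_iff_eq_neg.1 <| by
    simpa [hP, hQ, LinearMap.BilinForm.apply_eq_of_diamondGram hB] using (hskew (b 1) (b 2)).symm
  refine ⟨p, x, y, b.ext fun i => ?_⟩
  fin_cases i <;> simp [hb.lie_eq, hX, hP, hQ, hZ, hz, hq, sub_eq_add_neg]

end IsDiamondBasis

theorem diamond_skew_derivation_inner_general (g : Type) [LieRing g] [LieAlgebra ℂ g]
    (B : LinearMap.BilinForm ℂ g)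
    (b : Module.Basis (Fin 4) ℂ g)
    (hB : ∀ i j, B (b i) (b j) =
      ![![0, 0, 0, 1],
        ![0, 0, 1, 0],
        ![0, 1, 0, 0],
        ![1, 0, 0, 0]] i j)
    (hbr : ∀ i j, ⁅b i, b j⁆ =
      ![![0, b 1, -(b 2), 0],
        ![-(b 1), 0, b 3, 0],
        ![b 2, -(b 3), 0, 0],
        ![(0 : g), 0, 0, 0]] i j)
    (D : g →ₗ[ℂ] g)
    (hder : ∀ x y : g, D ⁅x, y⁆ = ⁅D x, y⁆ + ⁅x, D y⁆)
    (hskew : ∀ x y : g, B (D x) y = -(B x (D y))) :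
    ∃ W : g, (∀ v : g, D v = ⁅W, v⁆) ∧
      ∃ a y z : ℂ, W = a • b 0 - y • b 1 + z • b 2 := by
  have hchar : ringChar ℂ ≠ 2 := by rw [ringChar.eq_zero]; decide
  obtain ⟨a, y, z, hD⟩ := (IsDiamondBasis.of_lie_eq hbr).skew_derivation_eq_ad hchar hB hder hskew
  exact ⟨_, fun v => by rw [hD, LieAlgebra.ad_apply], a, y, z, rfl⟩

/-- **Skew-symmetric derivations of the diamond Lie algebra are inner.**
Let `g₄` be the diamond Lie algebra with basis `{X, P, Q, Z}` (here `b 0 = X`,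
`b 1 = P`, `b 2 = Q`, `b 3 = Z`), brackets `[X,P] = P`, `[X,Q] = -Q`, `[P,Q] = Z` (all
other brackets of basis elements zero) and invariant form `B` with
`B(X,Z) = B(P,Q) = 1`, all other values on basis pairs zero.  If `D` is a derivation of
`g₄` with `B(D(U), V) = -B(U, D(V))` for all `U, V`, then `D` is inner: `D = ad(W)` for
some `W`, indeed `W = a·X - y·P + z·Q` for suitable `a, y, z ∈ ℂ`. -/
theorem diamond_skew_derivation_inner (g : Type) [LieRing g] [LieAlgebra ℂ g]
    [FiniteDimensional ℂ g]
    (B : LinearMap.BilinForm ℂ g)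
    (b : Module.Basis (Fin 4) ℂ g)
    (hB : ∀ i j, B (b i) (b j) =
      ![![0, 0, 0, 1],
        ![0, 0, 1, 0],
        ![0, 1, 0, 0],
        ![1, 0, 0, 0]] i j)
    (hbr : ∀ i j, ⁅b i, b j⁆ =
      ![![0, b 1, -(b 2), 0],
        ![-(b 1), 0, b 3, 0],
        ![b 2, -(b 3), 0, 0],
        ![(0 : g), 0, 0, 0]] i j)
    (D : g →ₗ[ℂ] g)
    (hder : ∀ x y : g, D ⁅x, y⁆ = ⁅D x, y⁆ + ⁅x, D y⁆)
    (hskew : ∀ x y : g, B (D x) y = -(B x (D y))) :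
    ∃ W : g, (∀ v : g, D v = ⁅W, v⁆) ∧
      ∃ a y z : ℂ, W = a • b 0 - y • b 1 + z • b 2 :=
  diamond_skew_derivation_inner_general g B b hB hbr D hder hskew
end
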